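/- arXiv:1804.09511 — 8 statements merged into one kernel-verified Lean document; each statement's English description precedes it below -/
import Mathlib

section
/- Let b > 1 be an integer and let k, m be natural numbers with k ≡ m (mod b-1) and m < b-1. If a_1, ..., a_b are natural numbers satisfying ∑_{i=1}^{b} (i-1)·a_i = k, then ∑_{i=1}^{b} (b-i)·(i-1)·a_i ≥ m·(b-1-m). -/
/-!
Let `n = b - 1` and `g(k) = (k mod n)(n - k mod n)`. For `0 ≤ x ≤ n` we have `g(x) = x(n - x)`,
so `∑ (b - i)(i - 1) aᵢ = ∑ aᵢ g(i - 1)`. The function `g` is subadditive, because replacing the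
residues `r, s` by `n - r, n - s` when `r + s ≥ n` reduces to the case `r + s < n`, where
`g(r + s) = g(r) + g(s) - 2rs`. Hence `∑ aᵢ g(i - 1) ≥ g(∑ (i - 1) aᵢ) = g(k) = m(n - m)`.
-/

def residueProd (n k : ℕ) : ℕ := k % n * (n - k % n)

namespace residueProd

@[simp]
lemma zero_right (n : ℕ) : residueProd n 0 = 0 := by
  simp [residueProd]

lemma of_le {n x : ℕ} (hx : x ≤ n) : residueProd n x = x * (n - x) := by
  rcases hx.lt_or_eq with hlt | rfl
  · rw [residueProd, Nat.mod_eq_of_lt hlt]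
  · simp [residueProd]

lemma add_le (n x y : ℕ) : residueProd n (x + y) ≤ residueProd n x + residueProd n y := by
  rcases n.eq_zero_or_pos with rfl | hn
  · simp [residueProd]
  unfold residueProd
  rw [Nat.add_mod]
  have hr := Nat.mod_lt x hn
  have hs := Nat.mod_lt y hn
  generalize x % n = r at hr ⊢
  generalize y % n = s at hs ⊢
  by_cases hrs : r + s < n
  · rw [Nat.mod_eq_of_lt hrs]
    zify [hr.le, hs.le, hrs.le]
    nlinarith
  · rw [Nat.mod_eq_sub_mod (not_lt.mp hrs), Nat.mod_eq_of_lt (by omega)]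
    zify [hr.le, hs.le, not_lt.mp hrs, (by omega : r + s - n ≤ n)]
    nlinarith

lemma sum_le {ι : Type*} (n : ℕ) (s : Finset ι) (f : ι → ℕ) :
    residueProd n (∑ i ∈ s, f i) ≤ ∑ i ∈ s, residueProd n (f i) :=
  Finset.le_sum_of_subadditive _ (zero_right n).le (add_le n) s f

lemma mul_le (n x a : ℕ) : residueProd n (x * a) ≤ a * residueProd n x := by
  induction a with
  | zero => simp
  | succ a ih =>
    calc residueProd n (x * a + x) ≤ residueProd n (x * a) + residueProd n x := add_le n _ _
      _ ≤ (a + 1) * residueProd n x := by rw [add_mul, one_mul]; gcongr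

end residueProd

theorem stmt0_general (b k m : ℕ) (hmod : k ≡ m [MOD b - 1]) (hm : m < b - 1)
    (a : ℕ → ℕ) (hsum : ∑ i ∈ Finset.Icc 1 b, (i - 1) * a i = k) :
    m * (b - 1 - m) ≤ ∑ i ∈ Finset.Icc 1 b, (b - i) * ((i - 1) * a i) := by
  have hkm : k % (b - 1) = m := by rw [← Nat.mod_eq_of_lt hm]; exact hmod
  calc m * (b - 1 - m) = residueProd (b - 1) k := by rw [residueProd, hkm]
    _ ≤ ∑ i ∈ Finset.Icc 1 b, residueProd (b - 1) ((i - 1) * a i) :=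
      hsum ▸ residueProd.sum_le _ _ _
    _ ≤ ∑ i ∈ Finset.Icc 1 b, (b - i) * ((i - 1) * a i) := by
      refine Finset.sum_le_sum fun i hi => ?_
      have hi := Finset.mem_Icc.mp hi
      calc residueProd (b - 1) ((i - 1) * a i) ≤ a i * residueProd (b - 1) (i - 1) :=
            residueProd.mul_le _ _ _
        _ = (b - i) * ((i - 1) * a i) := by
          rw [residueProd.of_le (by omega), show b - 1 - (i - 1) = b - i by omega]
          ring

theorem stmt0 (b k m : ℕ) (hb : 1 < b) (hmod : k ≡ m [MOD b - 1]) (hm : m < b - 1)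
    (a : ℕ → ℕ) (hsum : ∑ i ∈ Finset.Icc 1 b, (i - 1) * a i = k) :
    m * (b - 1 - m) ≤ ∑ i ∈ Finset.Icc 1 b, (b - i) * ((i - 1) * a i) :=
  stmt0_general b k m hmod hm a hsum
end

section
/- Let b > 1 be an integer, and write k = ℓ·(b-1) + m with m < b-1. If a_1, ..., a_b are natural numbers satisfying ∑_{i=1}^{b} (i-1)·a_i = k, then ∑_{i=1}^{b} (i-1)²·a_i ≤ ℓ·(b-1)² + m². -/
/-!
Write `n = b - 1` and let `greedySqSum n k = (k / n) * n ^ 2 + (k % n) ^ 2` be the sum of squares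
of the greedy decomposition of `k` into parts of size at most `n`. Adding one part `d ≤ n` to any
decomposition raises the sum of squares by `d ^ 2`, but raises `greedySqSum` by at least `d ^ 2`;
so, part by part, the sum of squares of any decomposition is bounded by `greedySqSum`.
-/

open Finset

def greedySqSum (n k : ℕ) : ℕ := k / n * n ^ 2 + (k % n) ^ 2

lemma greedySqSum_mul_add {n r : ℕ} (q : ℕ) (hr : r < n) :
    greedySqSum n (n * q + r) = q * n ^ 2 + r ^ 2 := by
  have hn : 0 < n := by omega
  rw [greedySqSum, Nat.mul_add_div hn, Nat.div_eq_of_lt hr, Nat.mul_add_mod, Nat.mod_eq_of_lt hr,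
    add_zero]

lemma sq_add_greedySqSum_le {n d : ℕ} (k : ℕ) (hd : d ≤ n) :
    d ^ 2 + greedySqSum n k ≤ greedySqSum n (k + d) := by
  rcases Nat.eq_zero_or_pos n with rfl | hn
  · simp [Nat.le_zero.mp hd]
  obtain ⟨q, r, hr, rfl⟩ : ∃ q r, r < n ∧ k = n * q + r :=
    ⟨k / n, k % n, Nat.mod_lt _ hn, (Nat.div_add_mod k n).symm⟩
  rw [greedySqSum_mul_add q hr]
  rcases lt_or_ge (r + d) n with hrd | hrd
  · rw [add_assoc, greedySqSum_mul_add q hrd]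
    nlinarith
  · -- the new part closes a block of size `n`, leaving the remainder `s = r + d - n ≤ r`
    obtain ⟨s, hs⟩ : ∃ s, r + d = n + s := ⟨r + d - n, by omega⟩
    have hsr : s < n := by omega
    rw [show n * q + r + d = n * (q + 1) + s by rw [mul_add_one]; omega,
      greedySqSum_mul_add (q + 1) hsr]
    have key : r ^ 2 + d ^ 2 ≤ n ^ 2 + s ^ 2 := by
      zify at hs hd ⊢
      nlinarith [mul_nonneg (sub_nonneg.mpr hd) (by omega : (0 : ℤ) ≤ d - s)]
    nlinarith

lemma mul_sq_add_greedySqSum_le {n d : ℕ} (c k : ℕ) (hd : d ≤ n) :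
    c * d ^ 2 + greedySqSum n k ≤ greedySqSum n (k + c * d) := by
  induction c with
  | zero => simp
  | succ c ih =>
    calc (c + 1) * d ^ 2 + greedySqSum n k
        = d ^ 2 + (c * d ^ 2 + greedySqSum n k) := by ring
      _ ≤ d ^ 2 + greedySqSum n (k + c * d) := by gcongr
      _ ≤ greedySqSum n (k + c * d + d) := sq_add_greedySqSum_le _ hd
      _ = greedySqSum n (k + (c + 1) * d) := by ring_nf

lemma sum_sq_mul_le_greedySqSum {ι : Type*} (s : Finset ι) {n : ℕ} (w a : ι → ℕ)
    (hw : ∀ i ∈ s, w i ≤ n) :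
    ∑ i ∈ s, w i ^ 2 * a i ≤ greedySqSum n (∑ i ∈ s, w i * a i) := by
  classical
  induction s using Finset.induction_on with
  | empty => simp [greedySqSum]
  | insert j s hj ih =>
    rw [sum_insert hj, sum_insert hj]
    calc w j ^ 2 * a j + ∑ i ∈ s, w i ^ 2 * a i
        ≤ a j * w j ^ 2 + greedySqSum n (∑ i ∈ s, w i * a i) := by
          rw [mul_comm]
          gcongr
          exact ih fun i hi => hw i (mem_insert_of_mem hi)
      _ ≤ greedySqSum n (∑ i ∈ s, w i * a i + a j * w j) :=
          mul_sq_add_greedySqSum_le _ _ (hw j (mem_insert_self j s))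
      _ = greedySqSum n (w j * a j + ∑ i ∈ s, w i * a i) := by ring_nf

theorem stmt1_general (b ℓ m : ℕ) (hm : m < b - 1)
    (a : ℕ → ℕ) (hsum : ∑ i ∈ Finset.Icc 1 b, (i - 1) * a i = ℓ * (b - 1) + m) :
    ∑ i ∈ Finset.Icc 1 b, (i - 1) ^ 2 * a i ≤ ℓ * (b - 1) ^ 2 + m ^ 2 := by
  have hbound := sum_sq_mul_le_greedySqSum (Icc 1 b) (n := b - 1) (fun i => i - 1) a
    fun i hi => Nat.sub_le_sub_right (mem_Icc.mp hi).2 1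
  rwa [hsum, mul_comm ℓ, greedySqSum_mul_add ℓ hm] at hbound

theorem stmt1 (b ℓ m : ℕ) (hb : 1 < b) (hm : m < b - 1)
    (a : ℕ → ℕ) (hsum : ∑ i ∈ Finset.Icc 1 b, (i - 1) * a i = ℓ * (b - 1) + m) :
    ∑ i ∈ Finset.Icc 1 b, (i - 1) ^ 2 * a i ≤ ℓ * (b - 1) ^ 2 + m ^ 2 :=
  stmt1_general b ℓ m hm a hsum
end

section
/- Let P be a finite projective plane of order q, let P₀ be a point and let L be a set of lines such that every point other than P₀ lies on some line of L and P₀ lies on no line of L. If some point R ≠ P₀ lies on exactly q lines of L, then |L| ≥ 2q − 1. -/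
/-!
Let `m` be the line through `R` and `P₀`; it is not in `ℒ` since `P₀` is uncovered. Each of the
`q - 1` points of `m` other than `R` and `P₀` is covered by a line of `ℒ`, which cannot pass through
`R` (it would then be `m`), and two such points cannot share a covering line (it would again be `m`).
So `ℒ` has at least `q - 1` lines missing `R` besides the `q` lines through `R`.
-/

open Finset Configuration

namespace Configuration

variable {P L : Type*} [Membership P L] [∀ (p : P) (l : L), Decidable (p ∈ l)]

theorem ProjectivePlane.card_filter_mem_eq_order_add_one [ProjectivePlane P L] [Fintype P] [Finite L] (l : L) :
    #{p | p ∈ l} = ProjectivePlane.order P L + 1 := by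
  rw [← ProjectivePlane.pointCount_eq P l, pointCount, Nat.card_eq_fintype_card,
    Fintype.card_subtype]

theorem Nondegenerate.card_le_card_filter_notMem [Nondegenerate P L] {ℒ : Finset L} {m : L}
    (hm : m ∉ ℒ) {R : P} (hR : R ∈ m) {S : Finset P} (hSm : ∀ p ∈ S, p ∈ m) (hRS : R ∉ S)
    (hcov : ∀ p ∈ S, ∃ l ∈ ℒ, p ∈ l) : #S ≤ #{l ∈ ℒ | R ∉ l} := by
  have : Nonempty L := ⟨m⟩
  choose! f hfℒ hpf using hcov
  have hfm : ∀ p ∈ S, f p ≠ m := fun p hp h => hm (h ▸ hfℒ p hp)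
  refine card_le_card_of_injOn f (fun p hp => ?_) (fun p hp p' hp' hpp' => ?_)
  · refine mem_filter.2 ⟨hfℒ p hp, fun hRf => ?_⟩
    rcases Nondegenerate.eq_or_eq hR (hSm p hp) hRf (hpf p hp) with h | h
    · exact hRS (h ▸ hp)
    · exact hfm p hp h.symm
  · have hp'f : p' ∈ f p := hpp' ▸ hpf p' hp'
    exact (Nondegenerate.eq_or_eq (hSm p hp) (hSm p' hp') (hpf p hp) hp'f).resolve_right
      (fun h => hfm p hp h.symm)

end Configuration

theorem stmt7 {P L : Type*} [Membership P L] [Configuration.ProjectivePlane P L]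
    [Fintype P] [Fintype L] [∀ (p : P) (l : L), Decidable (p ∈ l)]
    (q : ℕ) (hq : Configuration.ProjectivePlane.order P L = q)
    (P₀ : P) (ℒ : Finset L)
    (hcov : ∀ p : P, p ≠ P₀ → ∃ l ∈ ℒ, p ∈ l)
    (hP₀ : ∀ l ∈ ℒ, P₀ ∉ l)
    (R : P) (hR : R ≠ P₀) (hRq : ({l ∈ ℒ | R ∈ l}).card = q) :
    2 * q - 1 ≤ ℒ.card := by
  classical
  obtain ⟨hRm, hP₀m⟩ := HasLines.mkLine_ax (L := L) hR
  set m : L := HasLines.mkLine hR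
  set S : Finset P := ({p | p ∈ m} : Finset P) \ {R, P₀}
  have hS : #S = q - 1 := by
    rw [card_sdiff_of_subset (by simp [insert_subset_iff, hRm, hP₀m]),
      ProjectivePlane.card_filter_mem_eq_order_add_one, hq, card_pair hR]
    omega
  have hSℒ : #S ≤ #{l ∈ ℒ | R ∉ l} :=
    Nondegenerate.card_le_card_filter_notMem (fun hm => hP₀ m hm hP₀m) hRm
      (fun p hp => (mem_filter.1 (mem_sdiff.1 hp).1).2) (by simp [S])
      (fun p hp => hcov p fun h => (mem_sdiff.1 hp).2 (by simp [h]))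
  have := card_filter_add_card_filter_not (s := ℒ) (p := fun l => R ∈ l)
  omega
end

section
/- Let P be a finite projective plane of order q, let P₀ be a point and let L be a set of lines such that every point other than P₀ lies on some line of L and P₀ lies on no line of L. If k ≤ q − 1 is the maximum number of lines of L through any point, and some point K attains this maximum, then |L| ≥ q + k. -/
open Finset

theorem stmt8 {P L : Type*} [Membership P L] [Configuration.ProjectivePlane P L]
    [Fintype P] [Fintype L] [∀ (p : P) (l : L), Decidable (p ∈ l)]
    (q : ℕ) (hq : Configuration.ProjectivePlane.order P L = q)
    (P₀ : P) (ℒ : Finset L)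
    (hcov : ∀ p : P, p ≠ P₀ → ∃ l ∈ ℒ, p ∈ l)
    (hP₀ : ∀ l ∈ ℒ, P₀ ∉ l)
    (k : ℕ) (hkq : k ≤ q - 1)
    (hmax : ∀ p : P, ({l ∈ ℒ | p ∈ l}).card ≤ k)
    (K : P) (hK : ({l ∈ ℒ | K ∈ l}).card = k) :
    q + k ≤ ℒ.card := by
  classical
  have hq2 : 2 ≤ q := by
    have := Configuration.ProjectivePlane.one_lt_order P L
    omega
  -- lineCount and pointCount as Finset cards
  have hlc : ∀ p : P, (univ.filter (fun l : L => p ∈ l)).card = q + 1 := by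
    intro p
    have := Configuration.ProjectivePlane.lineCount_eq L p
    rw [hq] at this
    rw [← this, Configuration.lineCount, Nat.card_eq_fintype_card, Fintype.card_subtype]
  have hpc : ∀ l : L, (univ.filter (fun p : P => p ∈ l)).card = q + 1 := by
    intro l
    have := Configuration.ProjectivePlane.pointCount_eq P l
    rw [hq] at this
    rw [← this, Configuration.pointCount, Nat.card_eq_fintype_card, Fintype.card_subtype]
  -- k ≥ 1
  have hk1 : 1 ≤ k := by
    by_contra h
    have hk0 : k = 0 := by omega
    obtain ⟨p₁, p₂, p₃, l₁, l₂, l₃, -, -, -, -, h₂₃, -, h₃₂, h₃₃⟩ :=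
      Configuration.ProjectivePlane.exists_config (P := P) (L := L)
    have hne : p₂ ≠ p₃ := fun h => h₃₃ (h ▸ h₂₃)
    have : ∃ p : P, p ≠ P₀ := by
      rcases eq_or_ne p₂ P₀ with h2 | h2
      · exact ⟨p₃, fun h3 => hne (h2.trans h3.symm)⟩
      · exact ⟨p₂, h2⟩
    obtain ⟨p, hp⟩ := this
    obtain ⟨l, hlℒ, hpl⟩ := hcov p hp
    have : 0 < ({l ∈ ℒ | p ∈ l}).card := card_pos.mpr ⟨l, mem_filter.mpr ⟨hlℒ, hpl⟩⟩
    have := hmax p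
    omega
  -- K ≠ P₀
  have hKP₀ : K ≠ P₀ := by
    intro h
    have : ({l ∈ ℒ | P₀ ∈ l}).card = 0 := by
      rw [card_eq_zero]
      ext l
      simp only [mem_filter, notMem_empty, iff_false, not_and]
      exact fun hl => hP₀ l hl
    rw [h, this] at hK
    omega
  -- the line through K and P₀
  set m : L := Configuration.HasLines.mkLine hKP₀ with hm
  have hKm : K ∈ m := (Configuration.HasLines.mkLine_ax hKP₀).1
  have hP₀m : P₀ ∈ m := (Configuration.HasLines.mkLine_ax hKP₀).2
  -- find ℓ through K, not in ℒ, avoiding P₀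
  have hex : ∃ ℓ : L, K ∈ ℓ ∧ ℓ ∉ ℒ ∧ P₀ ∉ ℓ := by
    by_contra h
    push_neg at h
    -- every line through K is in ℒ or contains P₀ (hence equals m)
    have hsub : univ.filter (fun l : L => K ∈ l) ⊆ ({l ∈ ℒ | K ∈ l}) ∪ {m} := by
      intro l hl
      simp only [mem_filter, mem_univ, true_and] at hl
      rcases Decidable.em (l ∈ ℒ) with hlℒ | hlℒ
      · exact mem_union_left _ (mem_filter.mpr ⟨hlℒ, hl⟩)
      · have hP₀l : P₀ ∈ l := h l hl hlℒ
        have : l = m := by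
          rcases Configuration.Nondegenerate.eq_or_eq hl hP₀l hKm hP₀m with h' | h'
          · exact absurd h' hKP₀
          · exact h'
        exact mem_union_right _ (by simp [this])
    have := (card_le_card hsub).trans (card_union_le _ _)
    rw [hlc K, hK, card_singleton] at this
    omega
  obtain ⟨ℓ, hKℓ, hℓℒ, hP₀ℓ⟩ := hex
  -- points of ℓ other than K
  set E : Finset P := (univ.filter (fun p : P => p ∈ ℓ)).erase K with hE
  have hEcard : E.card = q := by
    rw [hE, card_erase_of_mem (mem_filter.mpr ⟨mem_univ K, hKℓ⟩), hpc ℓ]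
    omega
  -- covering function
  have hcov' : ∀ p ∈ E, ∃ l ∈ ℒ, p ∈ l := by
    intro p hp
    rw [hE, mem_erase, mem_filter] at hp
    exact hcov p (fun h => hP₀ℓ (h ▸ hp.2.2))
  choose c hcℒ hcmem using hcov'
  -- the images avoid lines through K
  have hcK : ∀ p (hp : p ∈ E), K ∉ c p hp := by
    intro p hp hKc
    rw [hE, mem_erase, mem_filter] at hp
    rcases Configuration.Nondegenerate.eq_or_eq (hcmem p _) hKc hp.2.2 hKℓ with h' | h'
    · exact hp.1 h'
    · exact hℓℒ (h' ▸ hcℒ p _)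
  -- injectivity
  have hinj : ∀ p₁ (h₁ : p₁ ∈ E) p₂ (h₂ : p₂ ∈ E), c p₁ h₁ = c p₂ h₂ → p₁ = p₂ := by
    intro p₁ h₁ p₂ h₂ hc
    by_contra hne
    have hp₁ℓ : p₁ ∈ ℓ := (mem_filter.mp (mem_of_mem_erase h₁)).2
    have hp₂ℓ : p₂ ∈ ℓ := (mem_filter.mp (mem_of_mem_erase h₂)).2
    have hp₂c : p₂ ∈ c p₁ h₁ := hc ▸ hcmem p₂ h₂
    rcases Configuration.Nondegenerate.eq_or_eq (hcmem p₁ h₁) hp₂c hp₁ℓ hp₂ℓ with h' | h'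
    · exact hne h'
    · exact hℓℒ (h' ▸ hcℒ p₁ h₁)
  -- build the image finset
  set T : Finset L := E.attach.image (fun p => c p.1 p.2) with hT
  have hTcard : T.card = q := by
    rw [hT, card_image_of_injective _ (fun a b hab => Subtype.ext (hinj _ a.2 _ b.2 hab)),
      card_attach, hEcard]
  have hTsub : T ⊆ ℒ := by
    intro l hl
    rw [hT, mem_image] at hl
    obtain ⟨p, -, rfl⟩ := hl
    exact hcℒ p.1 p.2
  have hSsub : ({l ∈ ℒ | K ∈ l}) ⊆ ℒ := filter_subset _ _
  have hdisj : Disjoint ({l ∈ ℒ | K ∈ l}) T := by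
    rw [disjoint_left]
    intro l hlS hlT
    rw [hT, mem_image] at hlT
    obtain ⟨p, -, rfl⟩ := hlT
    exact hcK p.1 p.2 (mem_filter.mp hlS).2
  have := card_le_card (union_subset hSsub hTsub)
  rw [card_union_of_disjoint hdisj, hK, hTcard] at this
  omega
end

section
/- Let P be a finite projective plane of order q with q ≥ 25, let P₀ be a point and let L be a set of exactly q + ⌊√q⌋ + 2 lines such that every point other than P₀ lies on some line of L and P₀ lies on no line of L. Suppose the maximum number of lines of L through any point equals ⌊√q⌋ + 2. Then no line of P contains four points each lying on exactly ⌊√q⌋ + 2 lines of L. -/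
open Finset

section Aux

variable {P L : Type*} [Membership P L] [Configuration.ProjectivePlane P L]
    [Fintype P] [Fintype L] [∀ (p : P) (l : L), Decidable (p ∈ l)]

private lemma aux_Tcard (q : ℕ) (hq : Configuration.ProjectivePlane.order P L = q) (w : L) :
    (univ.filter (· ∈ w)).card = q + 1 := by
  have h1 : Configuration.pointCount P w = Configuration.ProjectivePlane.order P L + 1 :=
    Configuration.ProjectivePlane.pointCount_eq P w
  rw [Configuration.pointCount, Nat.card_eq_fintype_card, Fintype.card_subtype, hq] at h1
  exact h1

private lemma aux_lineSum (ℒ : Finset L) (w : L) (hw : w ∉ ℒ) :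
    ∑ p ∈ univ.filter (· ∈ w), (ℒ.filter fun m => p ∈ m).card = ℒ.card := by
  have hone : ∀ m ∈ ℒ, ((univ.filter (· ∈ w)).filter fun p => p ∈ m).card = 1 := by
    intro m hm
    have hmw : m ≠ w := fun h => hw (h ▸ hm)
    have hax := Configuration.HasPoints.mkPoint_ax (P := P) hmw
    rw [Finset.card_eq_one]
    refine ⟨Configuration.HasPoints.mkPoint (P := P) hmw, ?_⟩
    ext p
    simp only [Finset.mem_filter, Finset.mem_singleton, Finset.mem_univ, true_and]
    constructor
    · rintro ⟨hpw, hpm⟩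
      exact (Configuration.Nondegenerate.eq_or_eq hpm hax.1 hpw hax.2).resolve_right hmw
    · rintro rfl
      exact ⟨hax.2, hax.1⟩
  calc ∑ p ∈ univ.filter (· ∈ w), (ℒ.filter fun m => p ∈ m).card
      = ∑ p ∈ univ.filter (· ∈ w), ∑ m ∈ ℒ, if p ∈ m then 1 else 0 :=
        Finset.sum_congr rfl fun p _ => Finset.card_filter _ _
    _ = ∑ m ∈ ℒ, ∑ p ∈ univ.filter (· ∈ w), if p ∈ m then 1 else 0 := Finset.sum_comm
    _ = ∑ m ∈ ℒ, ((univ.filter (· ∈ w)).filter fun p => p ∈ m).card :=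
        Finset.sum_congr rfl fun m _ => (Finset.card_filter _ _).symm
    _ = ∑ _m ∈ ℒ, 1 := Finset.sum_congr rfl hone
    _ = ℒ.card := by simp

/-- The two-marked-points lower bound on a line not in `ℒ`. -/
private lemma aux_bound (q : ℕ) (hq : Configuration.ProjectivePlane.order P L = q)
    (P₀ : P) (ℒ : Finset L)
    (hcov : ∀ p : P, p ≠ P₀ → ∃ l ∈ ℒ, p ∈ l)
    (w : L) (hw : w ∉ ℒ) (a b : P) (hab : a ≠ b) (ha : a ∈ w) (hb : b ∈ w)
    (haP : a ≠ P₀) (hbP : b ≠ P₀) (hPw : P₀ ∉ w) :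
    (ℒ.filter fun m => a ∈ m).card + (ℒ.filter fun m => b ∈ m).card + (q - 1) ≤ ℒ.card := by
  classical
  have hd1 : ∀ p : P, p ≠ P₀ → 1 ≤ (ℒ.filter fun m => p ∈ m).card := by
    intro p hp
    obtain ⟨m, hm, hpm⟩ := hcov p hp
    exact Finset.card_pos.2 ⟨m, Finset.mem_filter.2 ⟨hm, hpm⟩⟩
  have haT : a ∈ univ.filter (· ∈ w) := Finset.mem_filter.2 ⟨Finset.mem_univ _, ha⟩
  have hbT : b ∈ (univ.filter (· ∈ w)).erase a :=
    Finset.mem_erase.2 ⟨Ne.symm hab, Finset.mem_filter.2 ⟨Finset.mem_univ _, hb⟩⟩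
  have e1 : (ℒ.filter fun m => a ∈ m).card
        + ∑ p ∈ (univ.filter (· ∈ w)).erase a, (ℒ.filter fun m => p ∈ m).card
      = ∑ p ∈ univ.filter (· ∈ w), (ℒ.filter fun m => p ∈ m).card :=
    Finset.add_sum_erase _ (fun x => (ℒ.filter fun m => x ∈ m).card) haT
  have e2 : (ℒ.filter fun m => b ∈ m).card
        + ∑ p ∈ ((univ.filter (· ∈ w)).erase a).erase b, (ℒ.filter fun m => p ∈ m).card
      = ∑ p ∈ (univ.filter (· ∈ w)).erase a, (ℒ.filter fun m => p ∈ m).card :=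
    Finset.add_sum_erase _ (fun x => (ℒ.filter fun m => x ∈ m).card) hbT
  have e3 : (((univ.filter (· ∈ w)).erase a).erase b).card
      ≤ ∑ p ∈ ((univ.filter (· ∈ w)).erase a).erase b, (ℒ.filter fun m => p ∈ m).card := by
    calc (((univ.filter (· ∈ w)).erase a).erase b).card
        = ∑ _p ∈ ((univ.filter (· ∈ w)).erase a).erase b, 1 := by simp
      _ ≤ _ := by
          apply Finset.sum_le_sum
          intro p hp
          have hpw : p ∈ w := (Finset.mem_filter.1
            (Finset.mem_of_mem_erase (Finset.mem_of_mem_erase hp))).2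
          exact hd1 p fun h => hPw (h ▸ hpw)
  have e4 : (((univ.filter (· ∈ w)).erase a).erase b).card = q - 1 := by
    rw [Finset.card_erase_of_mem hbT, Finset.card_erase_of_mem haT, aux_Tcard q hq]
    omega
  rw [e4] at e3
  rw [← aux_lineSum ℒ w hw, ← e1, ← e2]
  omega

/-- Existence of a point of multiplicity exactly 2 on a line through `P₀` that carries a
point of multiplicity `ℒ.card - q`. -/
private lemma aux_two (q : ℕ) (hq : Configuration.ProjectivePlane.order P L = q)
    (P₀ : P) (ℒ : Finset L)
    (hcov : ∀ p : P, p ≠ P₀ → ∃ l ∈ ℒ, p ∈ l)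
    (hP₀ : ∀ l ∈ ℒ, P₀ ∉ l) (hq2 : 2 ≤ q)
    (w : L) (hw : w ∉ ℒ) (p : P) (hp : p ∈ w) (hpP : p ≠ P₀) (hPw : P₀ ∈ w)
    (hc : ℒ.card = q + (ℒ.filter fun m => p ∈ m).card) :
    ∃ y : P, y ∈ w ∧ y ≠ p ∧ y ≠ P₀ ∧ (ℒ.filter fun m => y ∈ m).card = 2 := by
  classical
  have hd1 : ∀ x : P, x ≠ P₀ → 1 ≤ (ℒ.filter fun m => x ∈ m).card := by
    intro x hx
    obtain ⟨m, hm, hxm⟩ := hcov x hx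
    exact Finset.card_pos.2 ⟨m, Finset.mem_filter.2 ⟨hm, hxm⟩⟩
  have hdP₀ : (ℒ.filter fun m => P₀ ∈ m).card = 0 := by
    rw [Finset.card_eq_zero]
    exact Finset.filter_false_of_mem fun m hm => hP₀ m hm
  have hpT : p ∈ univ.filter (· ∈ w) := Finset.mem_filter.2 ⟨Finset.mem_univ _, hp⟩
  have hPT : P₀ ∈ (univ.filter (· ∈ w)).erase p :=
    Finset.mem_erase.2 ⟨Ne.symm hpP, Finset.mem_filter.2 ⟨Finset.mem_univ _, hPw⟩⟩
  set A : Finset P := ((univ.filter (· ∈ w)).erase p).erase P₀ with hA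
  have e1 : (ℒ.filter fun m => p ∈ m).card
        + ∑ x ∈ (univ.filter (· ∈ w)).erase p, (ℒ.filter fun m => x ∈ m).card
      = ∑ x ∈ univ.filter (· ∈ w), (ℒ.filter fun m => x ∈ m).card :=
    Finset.add_sum_erase _ (fun x => (ℒ.filter fun m => x ∈ m).card) hpT
  have e2 : (ℒ.filter fun m => P₀ ∈ m).card
        + ∑ x ∈ A, (ℒ.filter fun m => x ∈ m).card
      = ∑ x ∈ (univ.filter (· ∈ w)).erase p, (ℒ.filter fun m => x ∈ m).card :=
    Finset.add_sum_erase _ (fun x => (ℒ.filter fun m => x ∈ m).card) hPT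
  have hAsum : ∑ x ∈ A, (ℒ.filter fun m => x ∈ m).card = q := by
    have := aux_lineSum ℒ w hw
    omega
  have hAcard : A.card = q - 1 := by
    rw [hA, Finset.card_erase_of_mem hPT, Finset.card_erase_of_mem hpT, aux_Tcard q hq]
    omega
  have hAmem : ∀ x ∈ A, x ∈ w ∧ x ≠ p ∧ x ≠ P₀ := by
    intro x hx
    refine ⟨(Finset.mem_filter.1 (Finset.mem_of_mem_erase (Finset.mem_of_mem_erase hx))).2,
      Finset.ne_of_mem_erase (Finset.mem_of_mem_erase hx), Finset.ne_of_mem_erase hx⟩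
  have hy : ∃ y ∈ A, 2 ≤ (ℒ.filter fun m => y ∈ m).card := by
    by_contra hcon
    push_neg at hcon
    have hle : ∑ x ∈ A, (ℒ.filter fun m => x ∈ m).card ≤ ∑ _x ∈ A, 1 := by
      apply Finset.sum_le_sum
      intro x hx
      have := hcon x hx
      omega
    rw [Finset.sum_const, smul_eq_mul, mul_one, hAcard, hAsum] at hle
    omega
  obtain ⟨y, hyA, hy2⟩ := hy
  obtain ⟨hyw, hyp, hyP⟩ := hAmem y hyA
  refine ⟨y, hyw, hyp, hyP, ?_⟩
  have e3 : (ℒ.filter fun m => y ∈ m).card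
        + ∑ x ∈ A.erase y, (ℒ.filter fun m => x ∈ m).card
      = ∑ x ∈ A, (ℒ.filter fun m => x ∈ m).card :=
    Finset.add_sum_erase _ (fun x => (ℒ.filter fun m => x ∈ m).card) hyA
  have e5 : (A.erase y).card ≤ ∑ x ∈ A.erase y, (ℒ.filter fun m => x ∈ m).card := by
    calc (A.erase y).card = ∑ _x ∈ A.erase y, 1 := by simp
      _ ≤ _ := Finset.sum_le_sum fun x hx =>
          hd1 x (hAmem x (Finset.mem_of_mem_erase hx)).2.2
  rw [Finset.card_erase_of_mem hyA, hAcard] at e5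
  omega

end Aux

set_option maxHeartbeats 1000000 in
theorem stmt11 {P L : Type*} [Membership P L] [Configuration.ProjectivePlane P L]
    [Fintype P] [Fintype L] [∀ (p : P) (l : L), Decidable (p ∈ l)]
    (q : ℕ) (hq : Configuration.ProjectivePlane.order P L = q)
    (P₀ : P) (ℒ : Finset L)
    (hcov : ∀ p : P, p ≠ P₀ → ∃ l ∈ ℒ, p ∈ l)
    (hP₀ : ∀ l ∈ ℒ, P₀ ∉ l)
    (hq25 : 25 ≤ q) (hcard : ℒ.card = q + Nat.sqrt q + 2)
    (hmax : ∀ p : P, ({l ∈ ℒ | p ∈ l}).card ≤ Nat.sqrt q + 2)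
    (hex : ∃ p : P, ({l ∈ ℒ | p ∈ l}).card = Nat.sqrt q + 2) :
    ¬ ∃ (l : L) (p₁ p₂ p₃ p₄ : P),
        p₁ ≠ p₂ ∧ p₁ ≠ p₃ ∧ p₁ ≠ p₄ ∧ p₂ ≠ p₃ ∧ p₂ ≠ p₄ ∧ p₃ ≠ p₄ ∧
        p₁ ∈ l ∧ p₂ ∈ l ∧ p₃ ∈ l ∧ p₄ ∈ l ∧
        ({m ∈ ℒ | p₁ ∈ m}).card = Nat.sqrt q + 2 ∧
        ({m ∈ ℒ | p₂ ∈ m}).card = Nat.sqrt q + 2 ∧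
        ({m ∈ ℒ | p₃ ∈ m}).card = Nat.sqrt q + 2 ∧
        ({m ∈ ℒ | p₄ ∈ m}).card = Nat.sqrt q + 2 := by
  classical
  have hs5 : 5 ≤ Nat.sqrt q := Nat.le_sqrt.2 (by omega)
  rintro ⟨l, p₁, p₂, p₃, p₄, h12, h13, h14, h23, h24, h34, hp1l, hp2l, hp3l, hp4l,
    k1, k2, k3, k4⟩
  have hdP₀ : (ℒ.filter fun m => P₀ ∈ m).card = 0 := by
    rw [Finset.card_eq_zero]
    exact Finset.filter_false_of_mem fun m hm => hP₀ m hm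
  have hne0 : ∀ p : P, (ℒ.filter fun m => p ∈ m).card = Nat.sqrt q + 2 → p ≠ P₀ := by
    rintro p hp rfl
    rw [hdP₀] at hp
    omega
  have hp10 := hne0 p₁ k1
  have hp20 := hne0 p₂ k2
  have hp30 := hne0 p₃ k3
  have hp40 := hne0 p₄ k4
  by_cases hP₀l : P₀ ∈ l
  · -- easy case: l passes through P₀, so l ∉ ℒ; but then p₁, p₂ give too much weight
    have hlℒ : l ∉ ℒ := fun h => hP₀ l h hP₀l
    -- note P₀ ∈ l, so use the bound lemma on a different line: use aux_two style count directly
    -- simpler: sum over l minus p₁, p₂, P₀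
    have e1 := aux_lineSum ℒ l hlℒ
    have hp1T : p₁ ∈ univ.filter (· ∈ l) := Finset.mem_filter.2 ⟨Finset.mem_univ _, hp1l⟩
    have hp2T : p₂ ∈ (univ.filter (· ∈ l)).erase p₁ :=
      Finset.mem_erase.2 ⟨Ne.symm h12, Finset.mem_filter.2 ⟨Finset.mem_univ _, hp2l⟩⟩
    have e2 : (ℒ.filter fun m => p₁ ∈ m).card
          + ∑ x ∈ (univ.filter (· ∈ l)).erase p₁, (ℒ.filter fun m => x ∈ m).card
        = ∑ x ∈ univ.filter (· ∈ l), (ℒ.filter fun m => x ∈ m).card :=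
      Finset.add_sum_erase _ (fun x => (ℒ.filter fun m => x ∈ m).card) hp1T
    have e3 : (ℒ.filter fun m => p₂ ∈ m).card
          + ∑ x ∈ ((univ.filter (· ∈ l)).erase p₁).erase p₂, (ℒ.filter fun m => x ∈ m).card
        = ∑ x ∈ (univ.filter (· ∈ l)).erase p₁, (ℒ.filter fun m => x ∈ m).card :=
      Finset.add_sum_erase _ (fun x => (ℒ.filter fun m => x ∈ m).card) hp2T
    have hPmem : P₀ ∈ ((univ.filter (· ∈ l)).erase p₁).erase p₂ :=
      Finset.mem_erase.2 ⟨Ne.symm hp20, Finset.mem_erase.2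
        ⟨Ne.symm hp10, Finset.mem_filter.2 ⟨Finset.mem_univ _, hP₀l⟩⟩⟩
    have e4 : ((((univ.filter (· ∈ l)).erase p₁).erase p₂).erase P₀).card
        ≤ ∑ x ∈ ((univ.filter (· ∈ l)).erase p₁).erase p₂, (ℒ.filter fun m => x ∈ m).card := by
      calc ((((univ.filter (· ∈ l)).erase p₁).erase p₂).erase P₀).card
          = ∑ _x ∈ (((univ.filter (· ∈ l)).erase p₁).erase p₂).erase P₀, 1 := by simp
        _ ≤ ∑ x ∈ (((univ.filter (· ∈ l)).erase p₁).erase p₂).erase P₀,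
              (ℒ.filter fun m => x ∈ m).card := by
            apply Finset.sum_le_sum
            intro x hx
            obtain ⟨m, hm, hxm⟩ := hcov x (Finset.ne_of_mem_erase hx)
            exact Finset.card_pos.2 ⟨m, Finset.mem_filter.2 ⟨hm, hxm⟩⟩
        _ ≤ _ := Finset.sum_le_sum_of_subset (Finset.erase_subset _ _)
    have e5 : ((((univ.filter (· ∈ l)).erase p₁).erase p₂).erase P₀).card = q - 2 := by
      rw [Finset.card_erase_of_mem hPmem, Finset.card_erase_of_mem hp2T,
        Finset.card_erase_of_mem hp1T, aux_Tcard q hq]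
      omega
    rw [e5] at e4
    omega
  · -- main case: P₀ ∉ l
    have haxm₁ := Configuration.HasLines.mkLine_ax (L := L) hp10
    obtain ⟨hp1m₁, hP₀m₁⟩ := haxm₁
    have hlm₁ : l ≠ Configuration.HasLines.mkLine (L := L) hp10 := fun h => hP₀l (h ▸ hP₀m₁)
    have hm₁ℒ : Configuration.HasLines.mkLine (L := L) hp10 ∉ ℒ :=
      fun h => hP₀ _ h hP₀m₁
    obtain ⟨y, hym₁, hyp₁, hyP₀, hdy⟩ :=
      aux_two q hq P₀ ℒ hcov hP₀ (by omega) (Configuration.HasLines.mkLine (L := L) hp10)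
        hm₁ℒ p₁ hp1m₁ hp10 hP₀m₁ (by rw [hcard, k1]; omega)
    have hyl : y ∉ l := by
      intro hyl
      rcases Configuration.Nondegenerate.eq_or_eq hyl hp1l hym₁ hp1m₁ with h | h
      · exact hyp₁ h
      · exact hlm₁ h
    have hpjm₁ : ∀ p : P, p ∈ l → p ≠ p₁ → p ∉ Configuration.HasLines.mkLine (L := L) hp10 := by
      intro p hpl hpp1 hpm₁
      rcases Configuration.Nondegenerate.eq_or_eq hpl hp1l hpm₁ hp1m₁ with h | h
      · exact hpp1 h
      · exact hlm₁ h
    have hp2m₁ := hpjm₁ p₂ hp2l (Ne.symm h12)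
    have hp3m₁ := hpjm₁ p₃ hp3l (Ne.symm h13)
    have hp4m₁ := hpjm₁ p₄ hp4l (Ne.symm h14)
    have hyp2 : y ≠ p₂ := fun h => hp2m₁ (h ▸ hym₁)
    have hyp3 : y ≠ p₃ := fun h => hp3m₁ (h ▸ hym₁)
    have hyp4 : y ≠ p₄ := fun h => hp4m₁ (h ▸ hym₁)
    -- final contradiction for a joining line not in ℒ
    have final : ∀ (p : P) (hyp : y ≠ p), p ∈ l → (ℒ.filter fun m => p ∈ m).card = Nat.sqrt q + 2 →
        p ∉ Configuration.HasLines.mkLine (L := L) hp10 →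
        Configuration.HasLines.mkLine (L := L) hyp ∉ ℒ → False := by
      intro p hyp hpl hdp hpm₁ hwℒ
      obtain ⟨hyw, hpw⟩ := Configuration.HasLines.mkLine_ax (L := L) hyp
      have hP₀w : P₀ ∉ Configuration.HasLines.mkLine (L := L) hyp := by
        intro hP₀w
        rcases Configuration.Nondegenerate.eq_or_eq hyw hP₀w hym₁ hP₀m₁ with h | h
        · exact hyP₀ h
        · exact hpm₁ (h ▸ hpw)
      have hb := aux_bound q hq P₀ ℒ hcov (Configuration.HasLines.mkLine (L := L) hyp)
        hwℒ y p hyp hyw hpw hyP₀ (hne0 p hdp) hP₀w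
      rw [hdy, hdp, hcard] at hb
      omega
    -- the three joining lines are distinct, but y lies on only two lines of ℒ
    by_cases hw2 : Configuration.HasLines.mkLine (L := L) hyp2 ∈ ℒ
    · by_cases hw3 : Configuration.HasLines.mkLine (L := L) hyp3 ∈ ℒ
      · by_cases hw4 : Configuration.HasLines.mkLine (L := L) hyp4 ∈ ℒ
        · have hax2 := Configuration.HasLines.mkLine_ax (L := L) hyp2
          have hax3 := Configuration.HasLines.mkLine_ax (L := L) hyp3
          have hax4 := Configuration.HasLines.mkLine_ax (L := L) hyp4
          have hdist : ∀ (a b : P) (hya : y ≠ a) (hyb : y ≠ b), a ≠ b → a ∈ l → b ∈ l →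
              Configuration.HasLines.mkLine (L := L) hya ≠
                Configuration.HasLines.mkLine (L := L) hyb := by
            intro a b hya hyb hab hal hbl heq
            obtain ⟨hy_a, ha_a⟩ := Configuration.HasLines.mkLine_ax (L := L) hya
            obtain ⟨hy_b, hb_b⟩ := Configuration.HasLines.mkLine_ax (L := L) hyb
            rw [← heq] at hb_b
            rcases Configuration.Nondegenerate.eq_or_eq ha_a hb_b hal hbl with h | h
            · exact hab h
            · exact hyl (h ▸ hy_a)
          have h23' := hdist p₂ p₃ hyp2 hyp3 h23 hp2l hp3l
          have h24' := hdist p₂ p₄ hyp2 hyp4 h24 hp2l hp4l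
          have h34' := hdist p₃ p₄ hyp3 hyp4 h34 hp3l hp4l
          have hsub3 : ({Configuration.HasLines.mkLine (L := L) hyp2,
              Configuration.HasLines.mkLine (L := L) hyp3,
              Configuration.HasLines.mkLine (L := L) hyp4} : Finset L)
              ⊆ ℒ.filter fun m => y ∈ m := by
            intro m hm
            simp only [Finset.mem_insert, Finset.mem_singleton] at hm
            rcases hm with rfl | rfl | rfl
            · exact Finset.mem_filter.2 ⟨hw2, hax2.1⟩
            · exact Finset.mem_filter.2 ⟨hw3, hax3.1⟩
            · exact Finset.mem_filter.2 ⟨hw4, hax4.1⟩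
          have hcard3 : ({Configuration.HasLines.mkLine (L := L) hyp2,
              Configuration.HasLines.mkLine (L := L) hyp3,
              Configuration.HasLines.mkLine (L := L) hyp4} : Finset L).card = 3 := by
            rw [Finset.card_insert_of_notMem (by simp [h23', h24']),
              Finset.card_insert_of_notMem (by simp [h34']), Finset.card_singleton]
          have hle := Finset.card_le_card hsub3
          rw [hcard3, hdy] at hle
          omega
        · exact final p₄ hyp4 hp4l k4 hp4m₁ hw4
      · exact final p₃ hyp3 hp3l k3 hp3m₁ hw3
    · exact final p₂ hyp2 hp2l k2 hp2m₁ hw2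
end

section
/- Let P be a finite projective plane of order q with q ≥ 25, let P₀ be a point and let L be a set of exactly q + ⌊√q⌋ + 2 lines such that every point other than P₀ lies on some line of L and P₀ lies on no line of L. Suppose the maximum number of lines of L through any point equals ⌊√q⌋ + 2. Then the number of points lying on exactly ⌊√q⌋ + 2 lines of L is at most 5. -/
open Finset

section Aux

variable {α β : Type*} [DecidableEq α]

/-- Double counting: if every `l ∈ ℒ` is related to exactly one element of `A`,
then summing over `A` the number of related elements of `ℒ` gives `ℒ.card`. -/
lemma aux_sum_card_filter (ℒ : Finset β) (A : Finset α) (R : α → β → Prop)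
    [∀ a b, Decidable (R a b)] (h : ∀ l ∈ ℒ, (A.filter (fun x => R x l)).card = 1) :
    ∑ x ∈ A, (ℒ.filter (fun l => R x l)).card = ℒ.card := by
  calc ∑ x ∈ A, (ℒ.filter (fun l => R x l)).card
      = ∑ x ∈ A, ∑ l ∈ ℒ, ite (R x l) 1 0 := by
        refine Finset.sum_congr rfl fun x _ => ?_
        rw [Finset.card_filter]
    _ = ∑ l ∈ ℒ, ∑ x ∈ A, ite (R x l) 1 0 := Finset.sum_comm
    _ = ∑ l ∈ ℒ, 1 := by
        refine Finset.sum_congr rfl fun l hl => ?_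
        rw [← Finset.card_filter]
        exact h l hl
    _ = ℒ.card := by simp

/-- If all values are ≥ 1 and the sum exceeds the cardinality by exactly one, there is a
unique element of value 2, all others having value 1. -/
lemma aux_unique_two (T : Finset α) (f : α → ℕ) (h1 : ∀ x ∈ T, 1 ≤ f x)
    (hsum : ∑ x ∈ T, f x = T.card + 1) :
    ∃ z ∈ T, f z = 2 ∧ ∀ x ∈ T, x ≠ z → f x = 1 := by
  have hz : ∃ z ∈ T, 2 ≤ f z := by
    by_contra hcon
    push_neg at hcon
    have hle : ∑ x ∈ T, f x ≤ ∑ _x ∈ T, 1 :=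
      Finset.sum_le_sum fun x hx => by have := hcon x hx; omega
    rw [Finset.sum_const, smul_eq_mul, mul_one] at hle
    omega
  obtain ⟨z, hzT, hz2⟩ := hz
  have key : ∀ x ∈ T, x ≠ z → f x = 1 := by
    intro x hxT hne
    have hxz : x ∈ T.erase z := Finset.mem_erase.mpr ⟨hne, hxT⟩
    have e1 : f z + ∑ y ∈ T.erase z, f y = ∑ y ∈ T, f y := Finset.add_sum_erase T f hzT
    have e2 : f x + ∑ y ∈ (T.erase z).erase x, f y = ∑ y ∈ T.erase z, f y :=
      Finset.add_sum_erase _ f hxz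
    have e3 : ((T.erase z).erase x).card ≤ ∑ y ∈ (T.erase z).erase x, f y := by
      rw [Finset.card_eq_sum_ones]
      exact Finset.sum_le_sum fun y hy =>
        h1 y (Finset.mem_of_mem_erase (Finset.mem_of_mem_erase hy))
    have e4 : ((T.erase z).erase x).card = T.card - 2 := by
      rw [Finset.card_erase_of_mem hxz, Finset.card_erase_of_mem hzT]; omega
    have hTc : 2 ≤ T.card := by
      have h5 : 1 ≤ (T.erase z).card := Finset.card_pos.mpr ⟨x, hxz⟩
      rw [Finset.card_erase_of_mem hzT] at h5
      omega
    have hx1 := h1 x hxT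
    omega
  refine ⟨z, hzT, ?_, key⟩
  have e1 : f z + ∑ y ∈ T.erase z, f y = ∑ y ∈ T, f y := Finset.add_sum_erase T f hzT
  have e2 : ∑ y ∈ T.erase z, f y = (T.erase z).card := by
    rw [Finset.card_eq_sum_ones]
    exact Finset.sum_congr rfl fun y hy =>
      key y (Finset.mem_of_mem_erase hy) (Finset.ne_of_mem_erase hy)
  have e3 : (T.erase z).card = T.card - 1 := Finset.card_erase_of_mem hzT
  have e4 : 1 ≤ T.card := Finset.card_pos.mpr ⟨z, hzT⟩
  omega

/-- Lower bound for a sum with two distinguished elements and all values ≥ 1. -/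
lemma aux_sum_lb (A : Finset α) (f : α → ℕ) {x y : α} (hx : x ∈ A) (hy : y ∈ A)
    (hne : x ≠ y) (h1 : ∀ a ∈ A, 1 ≤ f a) :
    f x + f y + (A.card - 2) ≤ ∑ a ∈ A, f a := by
  have hyx : y ∈ A.erase x := Finset.mem_erase.mpr ⟨hne.symm, hy⟩
  have e1 : f x + ∑ a ∈ A.erase x, f a = ∑ a ∈ A, f a := Finset.add_sum_erase A f hx
  have e2 : f y + ∑ a ∈ (A.erase x).erase y, f a = ∑ a ∈ A.erase x, f a :=
    Finset.add_sum_erase _ f hyx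
  have e3 : ((A.erase x).erase y).card ≤ ∑ a ∈ (A.erase x).erase y, f a := by
    rw [Finset.card_eq_sum_ones]
    exact Finset.sum_le_sum fun a ha =>
      h1 a (Finset.mem_of_mem_erase (Finset.mem_of_mem_erase ha))
  have e4 : ((A.erase x).erase y).card = A.card - 2 := by
    rw [Finset.card_erase_of_mem hyx, Finset.card_erase_of_mem hx]; omega
  omega

/-- Extract four pairwise distinct elements from a set of size at least 4. -/
lemma aux_four (S : Finset α) (hS : 4 ≤ S.card) :
    ∃ a b c d, a ∈ S ∧ b ∈ S ∧ c ∈ S ∧ d ∈ S ∧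
      a ≠ b ∧ a ≠ c ∧ a ≠ d ∧ b ≠ c ∧ b ≠ d ∧ c ≠ d := by
  obtain ⟨a, ha⟩ := Finset.card_pos.mp (by omega : 0 < S.card)
  have h3 : 3 ≤ (S.erase a).card := by
    rw [Finset.card_erase_of_mem ha]; omega
  obtain ⟨t, hts, htc⟩ := Finset.exists_subset_card_eq h3
  obtain ⟨b, c, d, hbc, hbd, hcd, rfl⟩ := Finset.card_eq_three.mp htc
  have hb : b ∈ S.erase a := hts (by simp)
  have hc : c ∈ S.erase a := hts (by simp)
  have hd : d ∈ S.erase a := hts (by simp)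
  exact ⟨a, b, c, d, ha, Finset.mem_of_mem_erase hb, Finset.mem_of_mem_erase hc,
    Finset.mem_of_mem_erase hd, (Finset.ne_of_mem_erase hb).symm,
    (Finset.ne_of_mem_erase hc).symm, (Finset.ne_of_mem_erase hd).symm, hbc, hbd, hcd⟩

end Aux

theorem stmt12 {P L : Type*} [Membership P L] [Configuration.ProjectivePlane P L]
    [Fintype P] [Fintype L] [∀ (p : P) (l : L), Decidable (p ∈ l)]
    (q : ℕ) (hq : Configuration.ProjectivePlane.order P L = q)
    (P₀ : P) (ℒ : Finset L)
    (hcov : ∀ p : P, p ≠ P₀ → ∃ l ∈ ℒ, p ∈ l)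
    (hP₀ : ∀ l ∈ ℒ, P₀ ∉ l)
    (hq25 : 25 ≤ q) (hcard : ℒ.card = q + Nat.sqrt q + 2)
    (hmax : ∀ p : P, ({l ∈ ℒ | p ∈ l}).card ≤ Nat.sqrt q + 2)
    (hex : ∃ p : P, ({l ∈ ℒ | p ∈ l}).card = Nat.sqrt q + 2) :
    ({p : P | ({l ∈ ℒ | p ∈ l}).card = Nat.sqrt q + 2} : Finset P).card ≤ 5 := by
  classical
  set s := Nat.sqrt q with hs
  have hs5 : 5 ≤ s := Nat.le_sqrt.mpr (by omega)
  -- the degree of a point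
  set deg : P → ℕ := fun p => (ℒ.filter (fun l => p ∈ l)).card with hdeg
  set K : Finset P := univ.filter (fun p => deg p = s + 2) with hKdef
  show K.card ≤ 5
  by_contra hK5
  push_neg at hK5
  have hK6 : 6 ≤ K.card := hK5
  clear hK5 hmax hex
  -- basic facts
  have hdegP₀ : deg P₀ = 0 := by
    simp only [hdeg, Finset.card_eq_zero]
    exact Finset.filter_eq_empty_iff.mpr fun l hl => hP₀ l hl
  have hdeg1 : ∀ x : P, x ≠ P₀ → 1 ≤ deg x := by
    intro x hx
    obtain ⟨l, hl, hxl⟩ := hcov x hx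
    exact Finset.card_pos.mpr ⟨l, Finset.mem_filter.mpr ⟨hl, hxl⟩⟩
  have hKmem : ∀ p ∈ K, deg p = s + 2 := fun p hp => (Finset.mem_filter.mp hp).2
  have hKP₀ : ∀ p ∈ K, p ≠ P₀ := by
    intro p hp h
    have := hKmem p hp
    rw [h, hdegP₀] at this
    omega
  -- every line has q+1 points
  have hPts : ∀ l : L, (univ.filter (fun p : P => p ∈ l)).card = q + 1 := by
    intro l
    have h := Configuration.ProjectivePlane.pointCount_eq P l
    rwa [hq, Configuration.pointCount, Nat.card_eq_fintype_card, Fintype.card_subtype] at h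
  -- unique intersection point of two distinct lines
  have hint : ∀ l m : L, l ≠ m → ∃! x : P, x ∈ l ∧ x ∈ m := by
    intro l m h
    obtain ⟨h1, h2⟩ := Configuration.HasPoints.mkPoint_ax (P := P) (L := L) h
    exact ⟨_, ⟨h1, h2⟩, fun y hy =>
      (Configuration.Nondegenerate.eq_or_eq hy.1 h1 hy.2 h2).resolve_right h⟩
  have eqOrEq : ∀ {p₁ p₂ : P} {l₁ l₂ : L},
      p₁ ∈ l₁ → p₂ ∈ l₁ → p₁ ∈ l₂ → p₂ ∈ l₂ → p₁ = p₂ ∨ l₁ = l₂ :=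
    fun h1 h2 h3 h4 => Configuration.Nondegenerate.eq_or_eq h1 h2 h3 h4
  -- sum of degrees over the points of a line not in ℒ
  have inst_a : ∀ n : L, n ∉ ℒ →
      ∑ x ∈ univ.filter (fun p : P => p ∈ n), deg x = ℒ.card := by
    intro n hn
    refine aux_sum_card_filter ℒ _ (fun x l => x ∈ l) ?_
    intro l hl
    obtain ⟨x, ⟨hxl, hxn⟩, huniq⟩ := hint l n (fun h => hn (h ▸ hl))
    refine Finset.card_eq_one.mpr ⟨x, Finset.eq_singleton_iff_unique_mem.mpr ⟨?_, ?_⟩⟩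
    · simp only [Finset.mem_filter, Finset.mem_univ, true_and]
      exact ⟨hxn, hxl⟩
    · intro y hy
      simp only [Finset.mem_filter, Finset.mem_univ, true_and] at hy
      exact huniq y ⟨hy.2, hy.1⟩
  -- sum of degrees over the points ≠ P₀ of a line through P₀
  have inst_b : ∀ σ : L, P₀ ∈ σ →
      ∑ x ∈ (univ.filter (fun p : P => p ∈ σ)).erase P₀, deg x = ℒ.card := by
    intro σ hσ
    refine aux_sum_card_filter ℒ _ (fun x l => x ∈ l) ?_
    intro l hl
    have hlσ : l ≠ σ := fun h => hP₀ l hl (h ▸ hσ)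
    obtain ⟨x, ⟨hxl, hxσ⟩, huniq⟩ := hint l σ hlσ
    have hxP₀ : x ≠ P₀ := fun h => hP₀ l hl (h ▸ hxl)
    refine Finset.card_eq_one.mpr ⟨x, Finset.eq_singleton_iff_unique_mem.mpr ⟨?_, ?_⟩⟩
    · simp only [Finset.mem_filter, Finset.mem_erase, Finset.mem_univ, true_and]
      exact ⟨⟨hxP₀, hxσ⟩, hxl⟩
    · intro y hy
      simp only [Finset.mem_filter, Finset.mem_erase, Finset.mem_univ, true_and] at hy
      exact huniq y ⟨hy.2, hy.1.2⟩
  -- THE KEY LEMMA: for each knot p there are two lines of ℒ not through p such that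
  -- every other knot is on one of them, and they meet in a point of degree 2.
  have key : ∀ p ∈ K, ∃ (l₁ l₂ : L) (z : P),
      l₁ ∈ ℒ ∧ l₂ ∈ ℒ ∧ l₁ ≠ l₂ ∧ p ∉ l₁ ∧ p ∉ l₂ ∧
      z ∈ l₁ ∧ z ∈ l₂ ∧ deg z = 2 ∧
      ∀ p' ∈ K, p' ≠ p → p' ∈ l₁ ∨ p' ∈ l₂ := by
    intro p hp
    have hdp : deg p = s + 2 := hKmem p hp
    have hpP₀ : p ≠ P₀ := hKP₀ p hp
    set σ : L := Configuration.HasLines.mkLine hpP₀ with hσdef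
    obtain ⟨hpσ, hP₀σ⟩ := Configuration.HasLines.mkLine_ax (P := P) (L := L) hpP₀
    have hσℒ : σ ∉ ℒ := fun h => hP₀ σ h hP₀σ
    set A : Finset P := (univ.filter (fun x : P => x ∈ σ)).erase P₀ with hAdef
    have hAcard : A.card = q := by
      rw [hAdef, Finset.card_erase_of_mem
        (by simp only [Finset.mem_filter, Finset.mem_univ, true_and]; exact hP₀σ), hPts σ]
      omega
    have hAsum : ∑ x ∈ A, deg x = ℒ.card := inst_b σ hP₀σ
    have hpA : p ∈ A := Finset.mem_erase.mpr ⟨hpP₀,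
      by simp only [Finset.mem_filter, Finset.mem_univ, true_and]; exact hpσ⟩
    set T : Finset P := A.erase p with hTdef
    have hTcard : T.card = q - 1 := by rw [hTdef, Finset.card_erase_of_mem hpA, hAcard]
    have hTP₀ : ∀ x ∈ T, x ≠ P₀ := fun x hx =>
      (Finset.mem_erase.mp (Finset.mem_of_mem_erase hx)).1
    have hTsum : ∑ x ∈ T, deg x = T.card + 1 := by
      have e1 : deg p + ∑ x ∈ T, deg x = ∑ x ∈ A, deg x := Finset.add_sum_erase A deg hpA
      rw [hAsum, hcard] at e1
      rw [hTcard]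
      omega
    obtain ⟨z, hzT, hz2, hothers⟩ := aux_unique_two T deg
      (fun x hx => hdeg1 x (hTP₀ x hx)) hTsum
    have hzp : z ≠ p := (Finset.mem_erase.mp hzT).1
    have hzA : z ∈ A := Finset.mem_of_mem_erase hzT
    have hzP₀ : z ≠ P₀ := (Finset.mem_erase.mp hzA).1
    have hzσ : z ∈ σ := by
      have := (Finset.mem_erase.mp hzA).2
      simpa only [Finset.mem_filter, Finset.mem_univ, true_and] using this
    obtain ⟨l₁, l₂, hne12, hpair⟩ := Finset.card_eq_two.mp hz2
    have hl₁ : l₁ ∈ ℒ ∧ z ∈ l₁ := by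
      have : l₁ ∈ ℒ.filter (fun l => z ∈ l) := by rw [hpair]; simp
      exact Finset.mem_filter.mp this
    have hl₂ : l₂ ∈ ℒ ∧ z ∈ l₂ := by
      have : l₂ ∈ ℒ.filter (fun l => z ∈ l) := by rw [hpair]; simp
      exact Finset.mem_filter.mp this
    have hpnot : ∀ l : L, l ∈ ℒ → z ∈ l → p ∉ l := by
      intro l hlℒ hzl hpl
      rcases eqOrEq hzl hpl hzσ hpσ with h | h
      · exact hzp h
      · exact hσℒ (h ▸ hlℒ)
    refine ⟨l₁, l₂, z, hl₁.1, hl₂.1, hne12, hpnot l₁ hl₁.1 hl₁.2, hpnot l₂ hl₂.1 hl₂.2,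
      hl₁.2, hl₂.2, hz2, ?_⟩
    intro p' hp' hne'
    have hdp' : deg p' = s + 2 := hKmem p' hp'
    have hp'P₀ : p' ≠ P₀ := hKP₀ p' hp'
    have hp'σ : p' ∉ σ := by
      intro h'
      have hp'A : p' ∈ A := Finset.mem_erase.mpr ⟨hp'P₀,
        by simp only [Finset.mem_filter, Finset.mem_univ, true_and]; exact h'⟩
      have hp'T : p' ∈ T := Finset.mem_erase.mpr ⟨hne', hp'A⟩
      by_cases hpz : p' = z
      · rw [hpz, hz2] at hdp'; omega
      · rw [hothers p' hp'T hpz] at hdp'; omega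
    have hp'z : p' ≠ z := by
      intro h
      rw [h, hz2] at hdp'
      omega
    set n : L := Configuration.HasLines.mkLine hp'z with hndef
    obtain ⟨hp'n, hzn⟩ := Configuration.HasLines.mkLine_ax (P := P) (L := L) hp'z
    have hnℒ : n ∈ ℒ := by
      by_contra hn
      by_cases hP₀n : P₀ ∈ n
      · rcases eqOrEq hzn hP₀n hzσ hP₀σ with h | h
        · exact hzP₀ h
        · exact hp'σ (h ▸ hp'n)
      · have hsumn : ∑ x ∈ univ.filter (fun p : P => p ∈ n), deg x = ℒ.card := inst_a n hn
        have hcardn : (univ.filter (fun p : P => p ∈ n)).card = q + 1 := hPts n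
        have hmem1 : p' ∈ univ.filter (fun p : P => p ∈ n) := by
          simp only [Finset.mem_filter, Finset.mem_univ, true_and]; exact hp'n
        have hmem2 : z ∈ univ.filter (fun p : P => p ∈ n) := by
          simp only [Finset.mem_filter, Finset.mem_univ, true_and]; exact hzn
        have h1' : ∀ a ∈ univ.filter (fun p : P => p ∈ n), 1 ≤ deg a := by
          intro a ha
          simp only [Finset.mem_filter, Finset.mem_univ, true_and] at ha
          exact hdeg1 a (fun h => hP₀n (h ▸ ha))
        have hlb := aux_sum_lb _ deg hmem1 hmem2 hp'z h1'
        rw [hsumn, hcard, hcardn, hdp', hz2] at hlb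
        omega
    have : n ∈ ℒ.filter (fun l => z ∈ l) := Finset.mem_filter.mpr ⟨hnℒ, hzn⟩
    rw [hpair] at this
    rcases Finset.mem_insert.mp this with h | h
    · exact Or.inl (h ▸ hp'n)
    · exact Or.inr ((Finset.mem_singleton.mp h) ▸ hp'n)
  -- Step 1: every line of ℒ contains at most 3 knots
  have atmost3 : ∀ l : L, (K.filter (fun p => p ∈ l)).card ≤ 3 := by
    intro l
    by_contra hcon
    push_neg at hcon
    obtain ⟨a, b, c, d, ha, hb, hc, hd, hab, hac, had, hbc, hbd, hcd⟩ :=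
      aux_four _ (by omega : 4 ≤ (K.filter (fun p => p ∈ l)).card)
    have haK := (Finset.mem_filter.mp ha).1
    have hal := (Finset.mem_filter.mp ha).2
    have hbK := (Finset.mem_filter.mp hb).1
    have hbl := (Finset.mem_filter.mp hb).2
    have hcK := (Finset.mem_filter.mp hc).1
    have hcl := (Finset.mem_filter.mp hc).2
    have hdK := (Finset.mem_filter.mp hd).1
    have hdl := (Finset.mem_filter.mp hd).2
    obtain ⟨l₁, l₂, z, hl₁ℒ, hl₂ℒ, h12, hal₁, hal₂, hzl₁, hzl₂, hz2, hall⟩ := key a haK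
    have H : ∀ m : L, a ∉ m → ∀ x y : P, x ∈ l → y ∈ l → x ∈ m → y ∈ m → x ≠ y → False := by
      intro m ham x y hxl hyl hxm hym hxy
      rcases eqOrEq hxm hym hxl hyl with h | h
      · exact hxy h
      · exact ham (h ▸ hal)
    have hb' := hall b hbK hab.symm
    have hc' := hall c hcK hac.symm
    have hd' := hall d hdK had.symm
    rcases hb' with h1 | h1 <;> rcases hc' with h2 | h2 <;> rcases hd' with h3 | h3
    · exact H l₁ hal₁ b c hbl hcl h1 h2 hbc
    · exact H l₁ hal₁ b c hbl hcl h1 h2 hbc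
    · exact H l₁ hal₁ b d hbl hdl h1 h3 hbd
    · exact H l₂ hal₂ c d hcl hdl h2 h3 hcd
    · exact H l₁ hal₁ c d hcl hdl h2 h3 hcd
    · exact H l₂ hal₂ b d hbl hdl h1 h3 hbd
    · exact H l₂ hal₂ b c hbl hcl h1 h2 hbc
    · exact H l₂ hal₂ b c hbl hcl h1 h2 hbc
  -- find a line of ℒ with at least 3 knots
  obtain ⟨p₀, hp₀⟩ := Finset.card_pos.mp (by omega : 0 < K.card)
  obtain ⟨l₁, l₂, z₀, hl₁ℒ, hl₂ℒ, h012, h0l₁, h0l₂, hz0l₁, hz0l₂, hz02, hall0⟩ := key p₀ hp₀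
  have hsub : K.erase p₀ ⊆ (K.filter (fun p => p ∈ l₁)) ∪ (K.filter (fun p => p ∈ l₂)) := by
    intro p' hp'
    have hp'K := Finset.mem_of_mem_erase hp'
    have hne := Finset.ne_of_mem_erase hp'
    rcases hall0 p' hp'K hne with h | h
    · exact Finset.mem_union_left _ (Finset.mem_filter.mpr ⟨hp'K, h⟩)
    · exact Finset.mem_union_right _ (Finset.mem_filter.mpr ⟨hp'K, h⟩)
  have hcards : 5 ≤ (K.filter (fun p => p ∈ l₁)).card + (K.filter (fun p => p ∈ l₂)).card := by
    have h1 : 5 ≤ (K.erase p₀).card := by rw [Finset.card_erase_of_mem hp₀]; omega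
    have h2 := Finset.card_le_card hsub
    have h3 := Finset.card_union_le (K.filter (fun p => p ∈ l₁)) (K.filter (fun p => p ∈ l₂))
    omega
  obtain ⟨lstar, hlstar3⟩ : ∃ l : L, 3 ≤ (K.filter (fun p => p ∈ l)).card := by
    rcases (by omega : 3 ≤ (K.filter (fun p => p ∈ l₁)).card ∨
        3 ≤ (K.filter (fun p => p ∈ l₂)).card) with h | h
    · exact ⟨l₁, h⟩
    · exact ⟨l₂, h⟩
  have hlstarcard : (K.filter (fun p => p ∈ lstar)).card = 3 :=
    le_antisymm (atmost3 lstar) hlstar3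
  obtain ⟨a, b, c, hab, hac, hbc, habc⟩ := Finset.card_eq_three.mp hlstarcard
  have haf : a ∈ K.filter (fun p => p ∈ lstar) := by rw [habc]; simp
  have hbf : b ∈ K.filter (fun p => p ∈ lstar) := by rw [habc]; simp
  have hcf : c ∈ K.filter (fun p => p ∈ lstar) := by rw [habc]; simp
  have haK := (Finset.mem_filter.mp haf).1
  have hals := (Finset.mem_filter.mp haf).2
  have hbK := (Finset.mem_filter.mp hbf).1
  have hbls := (Finset.mem_filter.mp hbf).2
  have hcK := (Finset.mem_filter.mp hcf).1
  have hcls := (Finset.mem_filter.mp hcf).2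
  -- knots off lstar
  set Koff : Finset P := K.filter (fun p => p ∉ lstar) with hKoffdef
  have hKoffcard : 3 ≤ Koff.card := by
    have h := Finset.card_filter_add_card_filter_not
      (s := K) (p := fun p => p ∈ lstar)
    have h2 : (K.filter (fun p => ¬ p ∈ lstar)).card = Koff.card := rfl
    have h3 : (K.filter (fun p => p ∈ lstar)).card = 3 := hlstarcard
    omega
  have hKoffmem : ∀ w ∈ Koff, w ∈ K ∧ w ∉ lstar := fun w hw => Finset.mem_filter.mp hw
  -- structure of knots off lstar
  have W : ∀ w ∈ Koff, ∃ (m : L) (zw : P),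
      m ∈ ℒ ∧ w ∉ m ∧ zw ∈ m ∧ zw ∈ lstar ∧ deg zw = 2 ∧
      ∀ p' ∈ K, p' ≠ w → p' ∉ lstar → p' ∈ m := by
    intro w hw
    obtain ⟨hwK, hwls⟩ := hKoffmem w hw
    obtain ⟨m₁, m₂, zw, hm₁ℒ, hm₂ℒ, hm12, hwm₁, hwm₂, hzwm₁, hzwm₂, hzw2, hallw⟩ := key w hwK
    have haw : a ≠ w := fun h => hwls (h ▸ hals)
    have hbw : b ≠ w := fun h => hwls (h ▸ hbls)
    have hcw : c ≠ w := fun h => hwls (h ▸ hcls)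
    have H2 : ∀ m : L, ∀ x y : P, x ∈ lstar → y ∈ lstar → x ∈ m → y ∈ m → x ≠ y →
        m = lstar := by
      intro m x y hxls hyls hxm hym hxy
      rcases eqOrEq hxm hym hxls hyls with h | h
      · exact absurd h hxy
      · exact h
    have ha' := hallw a haK haw
    have hb' := hallw b hbK hbw
    have hc' := hallw c hcK hcw
    have hor : m₁ = lstar ∨ m₂ = lstar := by
      rcases ha' with h1 | h1 <;> rcases hb' with h2 | h2 <;> rcases hc' with h3 | h3
      · exact Or.inl (H2 m₁ a b hals hbls h1 h2 hab)
      · exact Or.inl (H2 m₁ a b hals hbls h1 h2 hab)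
      · exact Or.inl (H2 m₁ a c hals hcls h1 h3 hac)
      · exact Or.inr (H2 m₂ b c hbls hcls h2 h3 hbc)
      · exact Or.inl (H2 m₁ b c hbls hcls h2 h3 hbc)
      · exact Or.inr (H2 m₂ a c hals hcls h1 h3 hac)
      · exact Or.inr (H2 m₂ a b hals hbls h1 h2 hab)
      · exact Or.inr (H2 m₂ a b hals hbls h1 h2 hab)
    rcases hor with h | h
    · refine ⟨m₂, zw, hm₂ℒ, hwm₂, hzwm₂, h ▸ hzwm₁, hzw2, ?_⟩
      intro p' hp' hne hnl
      rcases hallw p' hp' hne with h' | h'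
      · exact absurd (h ▸ h') hnl
      · exact h'
    · refine ⟨m₁, zw, hm₁ℒ, hwm₁, hzwm₁, h ▸ hzwm₂, hzw2, ?_⟩
      intro p' hp' hne hnl
      rcases hallw p' hp' hne with h' | h'
      · exact h'
      · exact absurd (h ▸ h') hnl
  -- Step 4: at most 3 knots off lstar
  have hKoff3 : Koff.card ≤ 3 := by
    by_contra hcon
    push_neg at hcon
    obtain ⟨w₁, w₂, x, y, hw₁, hw₂, hx, hy, h12', h1x, h1y, h2x, h2y, hxy⟩ :=
      aux_four Koff (by omega)
    obtain ⟨m₁, z₁, hm₁ℒ, hw₁m₁, _, _, _, hprop₁⟩ := W w₁ hw₁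
    obtain ⟨m₂, z₂, hm₂ℒ, hw₂m₂, _, _, _, hprop₂⟩ := W w₂ hw₂
    obtain ⟨hxK, hxls⟩ := hKoffmem x hx
    obtain ⟨hyK, hyls⟩ := hKoffmem y hy
    have hxm₁ : x ∈ m₁ := hprop₁ x hxK (Ne.symm h1x) hxls
    have hym₁ : y ∈ m₁ := hprop₁ y hyK (Ne.symm h1y) hyls
    have hxm₂ : x ∈ m₂ := hprop₂ x hxK (Ne.symm h2x) hxls
    have hym₂ : y ∈ m₂ := hprop₂ y hyK (Ne.symm h2y) hyls
    have hm12 : m₁ = m₂ := by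
      rcases eqOrEq hxm₁ hym₁ hxm₂ hym₂ with h | h
      · exact absurd h hxy
      · exact h
    obtain ⟨hw₂K, hw₂ls⟩ := hKoffmem w₂ hw₂
    have : w₂ ∈ m₁ := hprop₁ w₂ hw₂K (Ne.symm h12') hw₂ls
    rw [hm12] at this
    exact hw₂m₂ this
  have hKoffcard3 : Koff.card = 3 := le_antisymm hKoff3 hKoffcard
  obtain ⟨d, e, f, hde, hdf, hef, hdef⟩ := Finset.card_eq_three.mp hKoffcard3
  have hdm : d ∈ Koff := by rw [hdef]; simp
  have hem : e ∈ Koff := by rw [hdef]; simp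
  have hfm : f ∈ Koff := by rw [hdef]; simp
  obtain ⟨hdK, hdls⟩ := hKoffmem d hdm
  obtain ⟨heK, hels⟩ := hKoffmem e hem
  obtain ⟨hfK, hfls⟩ := hKoffmem f hfm
  -- final contradiction via knot a
  obtain ⟨la₁, la₂, za, hla₁ℒ, hla₂ℒ, hla12, hala₁, hala₂, hzala₁, hzala₂, hza2, halla⟩ :=
    key a haK
  have hda : d ≠ a := fun h => hdls (h ▸ hals)
  have hea : e ≠ a := fun h => hels (h ▸ hals)
  have hfa : f ≠ a := fun h => hfls (h ▸ hals)
  have hba : b ≠ a := hab.symm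
  have hca : c ≠ a := hac.symm
  have hd' := halla d hdK hda
  have he' := halla e heK hea
  have hf' := halla f hfK hfa
  have hb' := halla b hbK hba
  have hc' := halla c hcK hca
  -- b and c cannot be on the same laᵢ
  have hsplit : (b ∈ la₁ ∨ c ∈ la₁) ∧ (b ∈ la₂ ∨ c ∈ la₂) := by
    have Hno : ∀ m : L, a ∉ m → b ∈ m → c ∈ m → False := by
      intro m ham hbm hcm
      rcases eqOrEq hbm hcm hbls hcls with h | h
      · exact hbc h
      · exact ham (h ▸ hals)
    rcases hb' with h1 | h1 <;> rcases hc' with h2 | h2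
    · exact (Hno la₁ hala₁ h1 h2).elim
    · exact ⟨Or.inl h1, Or.inr h2⟩
    · exact ⟨Or.inr h2, Or.inl h1⟩
    · exact (Hno la₂ hala₂ h1 h2).elim
  -- the final kill
  have FINAL : ∀ la : L, (b ∈ la ∨ c ∈ la) → ∀ w x y : P,
      w ∈ Koff → x ∈ Koff → y ∈ Koff → x ≠ y → x ≠ w → y ≠ w →
      x ∈ la → y ∈ la → False := by
    intro la hbcla w x y hw hx hy hxy hxw hyw hxla hyla
    obtain ⟨mw, zw, hmwℒ, hwmw, hzwmw, hzwls, hzw2, hpropw⟩ := W w hw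
    obtain ⟨hxK, hxls⟩ := hKoffmem x hx
    obtain ⟨hyK, hyls⟩ := hKoffmem y hy
    have hxmw : x ∈ mw := hpropw x hxK hxw hxls
    have hymw : y ∈ mw := hpropw y hyK hyw hyls
    have hlamw : la = mw := by
      rcases eqOrEq hxla hyla hxmw hymw with h | h
      · exact absurd h hxy
      · exact h
    have CORE : ∀ v : P, v ∈ K → v ∈ lstar → v ∈ la → False := by
      intro v hvK hvls hvla
      have hvmw : v ∈ mw := hlamw ▸ hvla
      rcases eqOrEq hvmw hzwmw hvls hzwls with h | h
      · have h1 := hKmem v hvK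
        rw [h, hzw2] at h1
        omega
      · exact hxls (h ▸ hxmw)
    rcases hbcla with h | h
    · exact CORE b hbK hbls h
    · exact CORE c hcK hcls h
  -- pigeonhole d, e, f into la₁, la₂
  rcases hd' with h1 | h1 <;> rcases he' with h2 | h2 <;> rcases hf' with h3 | h3
  · exact FINAL la₁ hsplit.1 f d e hfm hdm hem hde hdf hef h1 h2
  · exact FINAL la₁ hsplit.1 f d e hfm hdm hem hde hdf hef h1 h2
  · exact FINAL la₁ hsplit.1 e d f hem hdm hfm hdf hde hef.symm h1 h3
  · exact FINAL la₂ hsplit.2 d e f hdm hem hfm hef hde.symm hdf.symm h2 h3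
  · exact FINAL la₁ hsplit.1 d e f hdm hem hfm hef hde.symm hdf.symm h2 h3
  · exact FINAL la₂ hsplit.2 e d f hem hdm hfm hdf hde hef.symm h1 h3
  · exact FINAL la₂ hsplit.2 f d e hfm hdm hem hde hdf hef h1 h2
  · exact FINAL la₂ hsplit.2 f d e hfm hdm hem hde hdf hef h1 h2
end

section
/- Let A be a finite affine plane of order q with q ≥ 25, and let B be a set of points of A such that every line of A contains at least one point of B. Then |B| ≥ q + ⌊√q⌋ + 3. -/
/-!
Write `n = |B| = q + k` and `e l = |B ∩ l| ≥ 1`. The values of `e` on a parallel class sum to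
`n`, and so do those on the pencil of a point outside `B`; hence `e l ≤ k` for every line. Counting
triples (point of `B`, point of `B`, line through both) gives `∑ l, e l ^ 2 = n (n + q)`. On each
parallel class the `q` numbers `e - 1` sum to `k` and are at most `k - 1`, so by convexity their
squares sum to at most `(k - 1) ^ 2 + 1`; summing over the classes forces `k ≥ ⌊√q⌋ + 2`.

For `k = ⌊√q⌋ + 2` the lines with `e l = k` cannot all pass through one point `b₀`: the pencil of
`b₀` admits at most `⌊√q⌋ + 1` of them, and the classes not containing one obey the sharper bound
`(k - 2) ^ 2 + 4`, which contradicts the count. Otherwise every `b ∈ B` misses some line `ls` with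
`e ls = k`; all other lines through a point of `ls \ B` are tangents, so `b` lies on at most
`k + 1` secants. Each parallel class contains at least two secants, giving at least `2 (q + 1)` of
them, while, fixing `l₀` with `e l₀ = k`, every secant outside the class of `l₀` passes through
one of the `k` points of `B ∩ l₀`, giving at most `k ^ 2 + 2`. This is impossible once `q ≥ 25`.
-/

/-- An axiomatization of a finite affine plane of order `q` with point type `P` and
line type `L`: there are `q ^ 2` points and `q ^ 2 + q` lines, each line has `q` points,
each point lies on `q + 1` lines, and any two distinct points lie on a unique line. -/
structure IsAffinePlaneOfOrder (P L : Type*) [Membership P L] (q : ℕ) : Prop where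
  card_points : Nat.card P = q ^ 2
  card_lines : Nat.card L = q ^ 2 + q
  points_per_line : ∀ l : L, Nat.card {p : P // p ∈ l} = q
  lines_per_point : ∀ p : P, Nat.card {l : L // p ∈ l} = q + 1
  exists_unique_line : ∀ p₁ p₂ : P, p₁ ≠ p₂ → ∃! l : L, p₁ ∈ l ∧ p₂ ∈ l

open Finset

section Partition

variable {α : Type*} {s : Finset α} {x : α → ℕ}

theorem card_add_card_filter_one_lt_le_sum [DecidablePred fun a => 1 < x a]
    (hx : ∀ a ∈ s, 1 ≤ x a) :
    #s + #{a ∈ s | 1 < x a} ≤ ∑ a ∈ s, x a := by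
  rw [card_filter, card_eq_sum_ones, ← sum_add_distrib]
  refine sum_le_sum fun a ha => ?_
  have := hx a ha
  split_ifs <;> omega

theorem sum_le_card_add_mul_card_filter_one_lt [DecidablePred fun a => 1 < x a] {k : ℕ}
    (hx : ∀ a ∈ s, x a ≤ k) :
    ∑ a ∈ s, x a ≤ #s + (k - 1) * #{a ∈ s | 1 < x a} := by
  rw [card_filter, card_eq_sum_ones, mul_sum, ← sum_add_distrib]
  refine sum_le_sum fun a ha => ?_
  have := hx a ha
  split_ifs <;> omega

theorem sum_sq_le_of_sum_eq {k m : ℕ} (hs : ∑ a ∈ s, x a = k) (hx : ∀ a ∈ s, x a ≤ m)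
    (hkm : k ≤ 2 * m) : ∑ a ∈ s, x a ^ 2 ≤ m ^ 2 + (k - m) ^ 2 := by
  classical
  rcases s.eq_empty_or_nonempty with rfl | hne
  · simp
  -- Split off a largest part `t`; the other parts are bounded both by `t` and by their sum `R`.
  obtain ⟨a₀, ha₀, hmax⟩ := exists_max_image s x hne
  set t := x a₀
  set R := ∑ a ∈ s.erase a₀, x a
  have htR : t + R = k := by rw [← hs, add_sum_erase s x ha₀]
  have hrest : ∀ c, (∀ a ∈ s.erase a₀, x a ≤ c) → ∑ a ∈ s.erase a₀, x a ^ 2 ≤ c * R := by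
    intro c hc
    rw [mul_sum]
    exact sum_le_sum fun a ha => by rw [sq]; exact Nat.mul_le_mul_right _ (hc a ha)
  rw [← add_sum_erase s _ ha₀]
  have htm : t ≤ m := hx a₀ ha₀
  have hRR := hrest R fun a ha => single_le_sum (fun _ _ => Nat.zero_le _) ha
  have hRt := hrest t fun a ha => hmax a (mem_of_mem_erase ha)
  rcases le_or_gt m k with hmk | hkm_lt
  · obtain ⟨j, rfl⟩ := Nat.exists_eq_add_of_le hmk
    rw [Nat.add_sub_cancel_left]
    rcases le_or_gt R m with hR | hR <;> nlinarith
  · nlinarith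

end Partition

namespace IsAffinePlaneOfOrder

open scoped Classical

variable {P L : Type*} [Membership P L] {q : ℕ}

noncomputable def parallelClass [Fintype L] (l : L) : Finset L :=
  {l' | l' = l ∨ ∀ p : P, p ∈ l' → p ∉ l}

section Fintype

variable [Fintype L]

theorem mem_parallelClass {l l' : L} :
    l' ∈ parallelClass l ↔ l' = l ∨ ∀ p : P, p ∈ l' → p ∉ l := by
  simp [parallelClass]

theorem self_mem_parallelClass (l : L) : l ∈ parallelClass l := mem_parallelClass.2 (.inl rfl)

theorem mem_parallelClass_comm {l l' : L} : l' ∈ parallelClass l ↔ l ∈ parallelClass l' := by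
  simp only [mem_parallelClass]
  exact or_congr eq_comm ⟨fun h p hl hl' => h p hl' hl, fun h p hl' hl => h p hl hl'⟩

theorem exists_mem_mem_of_notMem_parallelClass {l l' : L} (h : l' ∉ parallelClass l) :
    ∃ p : P, p ∈ l' ∧ p ∈ l := by
  simp only [mem_parallelClass, not_or, not_forall, not_not] at h
  obtain ⟨-, p, hp, hpl⟩ := h
  exact ⟨p, hp, hpl⟩

end Fintype

theorem card_points_on [Fintype P] (hA : IsAffinePlaneOfOrder P L q) (l : L) :
    #{p : P | p ∈ l} = q := by
  rw [← Fintype.card_subtype, ← Nat.card_eq_fintype_card, hA.points_per_line]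

theorem card_lines_through [Fintype L] (hA : IsAffinePlaneOfOrder P L q) (p : P) :
    #{l : L | p ∈ l} = q + 1 := by
  rw [← Fintype.card_subtype, ← Nat.card_eq_fintype_card, hA.lines_per_point]

theorem eq_of_mem_of_mem (hA : IsAffinePlaneOfOrder P L q) {l l' : L} (hne : l ≠ l') {a b : P}
    (hal : a ∈ l) (hal' : a ∈ l') (hbl : b ∈ l) (hbl' : b ∈ l') : a = b := by
  by_contra hab
  obtain ⟨m, -, hm⟩ := hA.exists_unique_line a b hab
  exact hne ((hm l ⟨hal, hbl⟩).trans (hm l' ⟨hal', hbl'⟩).symm)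

theorem card_lines_through_pair [Fintype L] (hA : IsAffinePlaneOfOrder P L q) (a b : P) :
    #{l : L | a ∈ l ∧ b ∈ l} = 1 + if a = b then q else 0 := by
  split_ifs with hab
  · subst hab
    simpa [add_comm] using hA.card_lines_through a
  · obtain ⟨l, hl, hu⟩ := hA.exists_unique_line a b hab
    rw [card_eq_one]
    exact ⟨l, by ext l'; simpa using ⟨hu l', fun h => h ▸ hl⟩⟩

theorem sum_card_inter_lines_through [Fintype L] (hA : IsAffinePlaneOfOrder P L q)
    (T : Finset P) (p : P) :
    ∑ l ∈ {l : L | p ∈ l}, #{b ∈ T | b ∈ l} = #T + if p ∈ T then q else 0 := by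
  calc ∑ l ∈ {l : L | p ∈ l}, #{b ∈ T | b ∈ l}
      = ∑ b ∈ T, #{l : L | p ∈ l ∧ b ∈ l} := by
        refine (sum_card_bipartiteAbove_eq_sum_card_bipartiteBelow (fun l b => b ∈ l)).trans ?_
        simp only [bipartiteBelow, filter_filter]
    _ = #T + if p ∈ T then q else 0 := by
        simp only [hA.card_lines_through_pair, sum_add_distrib, sum_ite_eq, card_eq_sum_ones]

theorem card_parallelClass_filter_mem [Fintype P] [Fintype L] (hA : IsAffinePlaneOfOrder P L q)
    (l : L) (p : P) : #{l' ∈ parallelClass l | p ∈ l'} = 1 := by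
  by_cases hp : p ∈ l
  · rw [card_eq_one]
    refine ⟨l, ?_⟩
    ext l'
    simp only [mem_filter, mem_parallelClass, mem_singleton]
    constructor
    · rintro ⟨h | h, hpl'⟩
      exacts [h, absurd hp (h p hpl')]
    · rintro rfl
      exact ⟨.inl rfl, hp⟩
  -- The `q` points of `l` lie on distinct lines through `p`; one line through `p` is left over.
  set c : L → ℕ := fun l' => #{r ∈ ({r : P | r ∈ l} : Finset P) | r ∈ l'}
  have hsum : ∑ l' ∈ {l' : L | p ∈ l'}, c l' = q := by
    simp [c, hA.sum_card_inter_lines_through, hA.card_points_on, hp]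
  have hc : ∀ l' ∈ ({l' : L | p ∈ l'} : Finset L), c l' = if c l' ≠ 0 then 1 else 0 := by
    intro l' hl'
    have hne : l ≠ l' := by rintro rfl; exact hp (by simpa using hl')
    have : c l' ≤ 1 := card_le_one.2 fun a ha b hb => by
      simp only [mem_filter, mem_univ, true_and] at ha hb
      exact hA.eq_of_mem_of_mem hne ha.1 ha.2 hb.1 hb.2
    split_ifs <;> omega
  rw [sum_congr rfl hc, sum_boole, Nat.cast_id] at hsum
  have hsplit := card_filter_add_card_filter_not (s := ({l' : L | p ∈ l'} : Finset L))
    (p := fun l' => c l' = 0)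
  rw [hsum, hA.card_lines_through] at hsplit
  suffices {l' ∈ parallelClass l | p ∈ l'} = {l' ∈ ({l' : L | p ∈ l'} : Finset L) | c l' = 0} by
    rw [this]; omega
  ext l'
  simp only [c, mem_filter, mem_univ, true_and, mem_parallelClass, card_eq_zero,
    filter_eq_empty_iff]
  constructor
  · rintro ⟨rfl | h, hpl'⟩
    exacts [absurd hpl' hp, ⟨hpl', fun r hr hr' => h r hr' hr⟩]
  · rintro ⟨hpl', h⟩
    exact ⟨.inr fun r hr' hr => h hr hr', hpl'⟩

theorem sum_parallelClass_card_inter [Fintype P] [Fintype L] (hA : IsAffinePlaneOfOrder P L q)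
    (T : Finset P) (l : L) : ∑ l' ∈ parallelClass l, #{b ∈ T | b ∈ l'} = #T := by
  refine (sum_card_bipartiteAbove_eq_sum_card_bipartiteBelow (fun l' b => b ∈ l')).trans ?_
  simp [bipartiteBelow, hA.card_parallelClass_filter_mem]

theorem card_parallelClass [Fintype P] [Fintype L] (hA : IsAffinePlaneOfOrder P L q) (hq : 0 < q)
    (l : L) : #(parallelClass l) = q := by
  have h := hA.sum_parallelClass_card_inter univ l
  simp only [hA.card_points_on, sum_const, smul_eq_mul, card_univ, ← Nat.card_eq_fintype_card,
    hA.card_points, sq] at h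
  exact Nat.eq_of_mul_eq_mul_right hq h

theorem sum_sum_parallelClass [Fintype P] [Fintype L] (hA : IsAffinePlaneOfOrder P L q)
    (hq : 0 < q) (f : L → ℕ) : ∑ l, ∑ l' ∈ parallelClass l, f l' = q * ∑ l, f l := by
  rw [sum_comm' (t' := univ) (s' := parallelClass) fun l l' => by
    simp [mem_parallelClass_comm (l := l)]]
  simp [hA.card_parallelClass hq, mul_sum]

theorem sum_card_parallelClass_filter [Fintype P] [Fintype L] (hA : IsAffinePlaneOfOrder P L q)
    (hq : 0 < q) (r : L → Prop) [DecidablePred r] :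
    ∑ l, #{l' ∈ parallelClass l | r l'} = q * #{l | r l} := by
  simp only [card_filter, hA.sum_sum_parallelClass hq]

theorem sum_card_inter_sq [Fintype L] (hA : IsAffinePlaneOfOrder P L q) (T : Finset P) :
    ∑ l : L, #{b ∈ T | b ∈ l} ^ 2 = #T * (#T + q) := by
  calc ∑ l : L, #{b ∈ T | b ∈ l} ^ 2
      = ∑ l : L, #{x ∈ T ×ˢ T | x.1 ∈ l ∧ x.2 ∈ l} := by
        congr! 1 with l
        rw [sq, ← card_product, filter_product]
    _ = ∑ x ∈ T ×ˢ T, #{l : L | x.1 ∈ l ∧ x.2 ∈ l} := by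
        refine (sum_card_bipartiteAbove_eq_sum_card_bipartiteBelow
          (fun l (x : P × P) => x.1 ∈ l ∧ x.2 ∈ l)).trans ?_
        simp only [bipartiteBelow]
    _ = #T * (#T + q) := by
        simp only [sum_product, hA.card_lines_through_pair, sum_add_distrib, sum_ite_eq,
          sum_const, smul_eq_mul]
        rw [sum_ite_of_true fun _ h => h, sum_const, card_product, smul_eq_mul]
        ring

section BlockingSet

/- A line `ls` is *long* when `#{p ∈ B | p ∈ ls} + q = #B` (equality in
`card_inter_add_le_card_of_notMem`), and a *secant* when it meets `B` in at least two points. -/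

variable {B : Finset P}

theorem one_le_card_inter (hB : ∀ l : L, ∃ p ∈ B, p ∈ l) (l : L) : 1 ≤ #{p ∈ B | p ∈ l} :=
  let ⟨p, hp, hpl⟩ := hB l
  card_pos.2 ⟨p, mem_filter.2 ⟨hp, hpl⟩⟩

theorem card_inter_add_le_card_add_one [Fintype P] [Fintype L] (hA : IsAffinePlaneOfOrder P L q)
    (hq : 0 < q) (hB : ∀ l : L, ∃ p ∈ B, p ∈ l) (l : L) : #{p ∈ B | p ∈ l} + q ≤ #B + 1 := by
  have hsum := add_sum_erase _ (fun l' => #{p ∈ B | p ∈ l'}) (self_mem_parallelClass l)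
  have hrest := card_nsmul_le_sum ((parallelClass l).erase l) (fun l' => #{p ∈ B | p ∈ l'}) 1
    fun l' _ => one_le_card_inter hB l'
  rw [hA.sum_parallelClass_card_inter] at hsum
  rw [card_erase_of_mem (self_mem_parallelClass l), hA.card_parallelClass hq] at hrest
  simp only [smul_eq_mul, mul_one] at hrest
  omega

theorem card_inter_add_le_card_of_notMem [Fintype L] (hA : IsAffinePlaneOfOrder P L q)
    (hB : ∀ l : L, ∃ p ∈ B, p ∈ l) {l : L} {p : P} (hpl : p ∈ l) (hpB : p ∉ B) :
    #{b ∈ B | b ∈ l} + q ≤ #B := by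
  have hl : l ∈ ({l : L | p ∈ l} : Finset L) := by simpa
  have hsum := add_sum_erase _ (fun l' => #{b ∈ B | b ∈ l'}) hl
  have hrest := card_nsmul_le_sum (({l : L | p ∈ l} : Finset L).erase l)
    (fun l' => #{b ∈ B | b ∈ l'}) 1 fun l' _ => one_le_card_inter hB l'
  rw [hA.sum_card_inter_lines_through, if_neg hpB] at hsum
  rw [card_erase_of_mem hl, hA.card_lines_through] at hrest
  simp only [smul_eq_mul, mul_one] at hrest
  omega

theorem card_inter_add_le_card [Fintype P] [Fintype L] (hA : IsAffinePlaneOfOrder P L q)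
    (hq : 0 < q) (hB : ∀ l : L, ∃ p ∈ B, p ∈ l) (hsmall : #B + 1 < 2 * q) (l : L) :
    #{p ∈ B | p ∈ l} + q ≤ #B := by
  obtain ⟨p, hpl, hpB⟩ : ∃ p, p ∈ l ∧ p ∉ B := by
    by_contra! h
    have hsub : ({p : P | p ∈ l} : Finset P) ⊆ {p ∈ B | p ∈ l} := fun p hp => by
      simp only [mem_filter, mem_univ, true_and] at hp ⊢
      exact ⟨h p hp, hp⟩
    have := card_le_card hsub
    have := hA.card_inter_add_le_card_add_one hq hB l
    rw [hA.card_points_on] at *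
    omega
  exact hA.card_inter_add_le_card_of_notMem hB hpl hpB

theorem card_inter_eq_one_of_long [Fintype L] (hA : IsAffinePlaneOfOrder P L q)
    (hB : ∀ l : L, ∃ p ∈ B, p ∈ l) {ls : L} (hls : #{p ∈ B | p ∈ ls} + q = #B) {r : P}
    (hr : r ∈ ls) (hrB : r ∉ B) {l : L} (hrl : r ∈ l) (hne : l ≠ ls) : #{p ∈ B | p ∈ l} = 1 := by
  have hmem : ls ∈ ({l : L | r ∈ l} : Finset L) := by simpa
  have hsum := add_sum_erase _ (fun l' => #{p ∈ B | p ∈ l'}) hmem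
  rw [hA.sum_card_inter_lines_through, if_neg hrB] at hsum
  set others := ({l : L | r ∈ l} : Finset L).erase ls
  have hcard : #others = q := by
    rw [card_erase_of_mem hmem, hA.card_lines_through, Nat.add_sub_cancel]
  have := card_add_card_filter_one_lt_le_sum (s := others) (x := fun l' => #{p ∈ B | p ∈ l'})
    fun l' _ => one_le_card_inter hB l'
  have hnone : #{l' ∈ others | 1 < #{p ∈ B | p ∈ l'}} = 0 := by omega
  rw [card_eq_zero, filter_eq_empty_iff] at hnone
  have := hnone (mem_erase.2 ⟨hne, by simpa⟩)
  have := one_le_card_inter hB l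
  omega

theorem exists_mem_mem_of_long [Fintype L] (hA : IsAffinePlaneOfOrder P L q)
    (hB : ∀ l : L, ∃ p ∈ B, p ∈ l) {ls : L} (hls : #{p ∈ B | p ∈ ls} + q = #B) {l : L}
    (hl : l ∉ parallelClass ls) (hsec : 1 < #{p ∈ B | p ∈ l}) : ∃ r ∈ B, r ∈ l ∧ r ∈ ls := by
  obtain ⟨r, hrl, hrls⟩ := exists_mem_mem_of_notMem_parallelClass hl
  refine ⟨r, ?_, hrl, hrls⟩
  by_contra hrB
  have hne : l ≠ ls := by rintro rfl; exact hl (self_mem_parallelClass l)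
  have := hA.card_inter_eq_one_of_long hB hls hrls hrB hrl hne
  omega

theorem card_secants_through_le [Fintype P] [Fintype L] (hA : IsAffinePlaneOfOrder P L q)
    (hB : ∀ l : L, ∃ p ∈ B, p ∈ l) {ls : L} (hls : #{p ∈ B | p ∈ ls} + q = #B) {b : P}
    (hb : b ∉ ls) : #{l : L | b ∈ l ∧ 1 < #{p ∈ B | p ∈ l}} ≤ #{p ∈ B | p ∈ ls} + 1 := by
  have hsub : ({l : L | b ∈ l ∧ 1 < #{p ∈ B | p ∈ l}} : Finset L) ⊆
      {l ∈ parallelClass ls | b ∈ l} ∪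
        {p ∈ B | p ∈ ls}.biUnion fun r => {l : L | r ∈ l ∧ b ∈ l} := by
    intro l hl
    simp only [mem_filter, mem_univ, true_and] at hl
    by_cases hpar : l ∈ parallelClass ls
    · exact mem_union_left _ (mem_filter.2 ⟨hpar, hl.1⟩)
    · obtain ⟨r, hrB, hrl, hrls⟩ := hA.exists_mem_mem_of_long hB hls hpar hl.2
      exact mem_union_right _ (mem_biUnion.2 ⟨r, mem_filter.2 ⟨hrB, hrls⟩, by simp [hrl, hl.1]⟩)
  have hlines : ∀ r ∈ {p ∈ B | p ∈ ls}, #{l : L | r ∈ l ∧ b ∈ l} ≤ 1 := fun r hr => by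
    have hrb : r ≠ b := by rintro rfl; exact hb (mem_filter.1 hr).2
    simp [hA.card_lines_through_pair, hrb]
  calc _ ≤ _ := card_le_card hsub
    _ ≤ 1 + #{p ∈ B | p ∈ ls} := by
      refine (card_union_le _ _).trans (add_le_add (hA.card_parallelClass_filter_mem ls b).le ?_)
      exact card_biUnion_le.trans ((sum_le_sum hlines).trans (by simp))
    _ = _ := add_comm _ _

theorem card_secants_le [Fintype P] [Fintype L] (hA : IsAffinePlaneOfOrder P L q) (hq : 0 < q)
    (hB : ∀ l : L, ∃ p ∈ B, p ∈ l) {l₀ : L} (hl₀ : #{p ∈ B | p ∈ l₀} + q = #B)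
    (hsec : 1 < #{p ∈ B | p ∈ l₀})
    (hconc : ∀ b ∈ B, b ∈ l₀ → ∃ ls : L, #{p ∈ B | p ∈ ls} + q = #B ∧ b ∉ ls) :
    #{l : L | 1 < #{p ∈ B | p ∈ l}} ≤ #{p ∈ B | p ∈ l₀} * #{p ∈ B | p ∈ l₀} + 2 := by
  set k := #{p ∈ B | p ∈ l₀}
  have hclass : #{l ∈ parallelClass l₀ | 1 < #{p ∈ B | p ∈ l}} ≤ 2 := by
    have hsum := add_sum_erase _ (fun l => #{p ∈ B | p ∈ l}) (self_mem_parallelClass l₀)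
    rw [hA.sum_parallelClass_card_inter] at hsum
    have hrest := card_add_card_filter_one_lt_le_sum (s := (parallelClass l₀).erase l₀)
      (x := fun l => #{p ∈ B | p ∈ l}) fun l _ => one_le_card_inter hB l
    rw [card_erase_of_mem (self_mem_parallelClass l₀), hA.card_parallelClass hq, filter_erase]
      at hrest
    have := pred_card_le_card_erase (s := {l ∈ parallelClass l₀ | 1 < #{p ∈ B | p ∈ l}}) (a := l₀)
    omega
  have hthrough : ∀ b ∈ {p ∈ B | p ∈ l₀},
      #(({l : L | b ∈ l ∧ 1 < #{p ∈ B | p ∈ l}} : Finset L).erase l₀) ≤ k := by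
    intro b hb
    obtain ⟨hbB, hbl₀⟩ := mem_filter.1 hb
    obtain ⟨ls, hls, hbls⟩ := hconc b hbB hbl₀
    have := hA.card_secants_through_le hB hls hbls
    rw [card_erase_of_mem (by simpa using ⟨hbl₀, hsec⟩)]
    omega
  have hsub : ({l : L | 1 < #{p ∈ B | p ∈ l}} : Finset L) ⊆
      {l ∈ parallelClass l₀ | 1 < #{p ∈ B | p ∈ l}} ∪
        {p ∈ B | p ∈ l₀}.biUnion fun b =>
          ({l : L | b ∈ l ∧ 1 < #{p ∈ B | p ∈ l}} : Finset L).erase l₀ := by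
    intro l hl
    simp only [mem_filter, mem_univ, true_and] at hl
    by_cases hpar : l ∈ parallelClass l₀
    · exact mem_union_left _ (mem_filter.2 ⟨hpar, hl⟩)
    · obtain ⟨r, hrB, hrl, hrl₀⟩ := hA.exists_mem_mem_of_long hB hl₀ hpar hl
      have hne : l ≠ l₀ := by rintro rfl; exact hpar (self_mem_parallelClass l)
      exact mem_union_right _
        (mem_biUnion.2 ⟨r, mem_filter.2 ⟨hrB, hrl₀⟩, by simp [hne, hrl, hl]⟩)
  calc _ ≤ _ := card_le_card hsub
    _ ≤ 2 + k * k := by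
      refine (card_union_le _ _).trans (add_le_add hclass ?_)
      exact card_biUnion_le.trans ((sum_le_sum hthrough).trans (by simp [k]))
    _ = _ := add_comm _ _

theorem two_mul_succ_le_card_secants [Fintype P] [Fintype L] (hA : IsAffinePlaneOfOrder P L q)
    (hq : 0 < q) {k : ℕ} (hk : #B = q + k) (hk0 : 0 < k)
    (he : ∀ l : L, #{p ∈ B | p ∈ l} ≤ k) : 2 * (q + 1) ≤ #{l : L | 1 < #{p ∈ B | p ∈ l}} := by
  have hclass : ∀ l : L, 2 ≤ #{l' ∈ parallelClass l | 1 < #{p ∈ B | p ∈ l'}} := by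
    intro l
    have := sum_le_card_add_mul_card_filter_one_lt (s := parallelClass l)
      (x := fun l' => #{p ∈ B | p ∈ l'}) fun l' _ => he l'
    rw [hA.sum_parallelClass_card_inter, hA.card_parallelClass hq, hk] at this
    by_contra! h
    have := Nat.mul_le_mul_left (k - 1) (Nat.le_of_lt_succ h)
    omega
  have hsum := sum_le_sum fun l (_ : l ∈ univ) => hclass l
  rw [hA.sum_card_parallelClass_filter hq, sum_const, card_univ, ← Nat.card_eq_fintype_card,
    hA.card_lines, smul_eq_mul] at hsum
  refine Nat.le_of_mul_le_mul_left ?_ hq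
  nlinarith

theorem exists_one_lt_card_inter (hA : IsAffinePlaneOfOrder P L q) (hB : 1 < #B) :
    ∃ l : L, 1 < #{p ∈ B | p ∈ l} := by
  obtain ⟨a, ha, b, hb, hab⟩ := one_lt_card.1 hB
  obtain ⟨l, ⟨hal, hbl⟩, -⟩ := hA.exists_unique_line a b hab
  exact ⟨l, one_lt_card.2 ⟨a, mem_filter.2 ⟨ha, hal⟩, b, mem_filter.2 ⟨hb, hbl⟩, hab⟩⟩

theorem sum_parallelClass_sq_le [Fintype P] [Fintype L] (hA : IsAffinePlaneOfOrder P L q)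
    (hq : 0 < q) (hB : ∀ l : L, ∃ p ∈ B, p ∈ l) {k m : ℕ} (hk : #B = q + k) (hkm : k ≤ 2 * m)
    (l : L) (hm : ∀ l' ∈ parallelClass l, #{p ∈ B | p ∈ l'} ≤ m + 1) :
    ∑ l' ∈ parallelClass l, #{p ∈ B | p ∈ l'} ^ 2 ≤ q + 2 * k + m ^ 2 + (k - m) ^ 2 := by
  obtain ⟨x, hx⟩ : ∃ x : L → ℕ, ∀ l', #{p ∈ B | p ∈ l'} = x l' + 1 :=
    ⟨fun l' => #{p ∈ B | p ∈ l'} - 1, fun l' => (Nat.sub_add_cancel (one_le_card_inter hB l')).symm⟩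
  have hsum : ∑ l' ∈ parallelClass l, x l' = k := by
    have := hA.sum_parallelClass_card_inter B l
    simp only [hx, sum_add_distrib, sum_const, hA.card_parallelClass hq, smul_eq_mul,
      mul_one] at this
    omega
  have hsq := sum_sq_le_of_sum_eq hsum (fun l' hl' => by have := hm l' hl'; have := hx l'; omega)
    hkm
  calc ∑ l' ∈ parallelClass l, #{p ∈ B | p ∈ l'} ^ 2
      = ∑ l' ∈ parallelClass l, x l' ^ 2 + 2 * ∑ l' ∈ parallelClass l, x l' + q := by
        simp only [hx, add_sq, mul_one, one_pow, sum_add_distrib, mul_sum, sum_const,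
          hA.card_parallelClass hq, smul_eq_mul]
    _ ≤ _ := by omega

theorem card_mul_card_add_le_of_card_inter_le_succ [Fintype P] [Fintype L]
    (hA : IsAffinePlaneOfOrder P L q) (hq : 0 < q) (hB : ∀ l : L, ∃ p ∈ B, p ∈ l) {k m : ℕ}
    (hk : #B = q + k) (hkm : k ≤ 2 * m)
    (hm : ∀ l : L, #{p ∈ B | p ∈ l} ≤ m + 1) :
    #B * (#B + q) ≤ (q + 1) * (q + 2 * k + m ^ 2 + (k - m) ^ 2) := by
  refine Nat.le_of_mul_le_mul_left ?_ hq
  calc q * (#B * (#B + q))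
      = ∑ l : L, ∑ l' ∈ parallelClass l, #{p ∈ B | p ∈ l'} ^ 2 := by
        rw [hA.sum_sum_parallelClass hq, hA.sum_card_inter_sq]
    _ ≤ ∑ _l : L, (q + 2 * k + m ^ 2 + (k - m) ^ 2) :=
        sum_le_sum fun l _ => hA.sum_parallelClass_sq_le hq hB hk hkm l fun l' _ => hm l'
    _ = q * ((q + 1) * (q + 2 * k + m ^ 2 + (k - m) ^ 2)) := by
        rw [sum_const, card_univ, ← Nat.card_eq_fintype_card, hA.card_lines, smul_eq_mul]
        ring

theorem card_mul_card_add_le_add_mul_card_long [Fintype P] [Fintype L]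
    (hA : IsAffinePlaneOfOrder P L q) (hq : 0 < q) (hB : ∀ l : L, ∃ p ∈ B, p ∈ l) {k : ℕ}
    (hk : #B = q + k) (hk4 : 4 ≤ k) (he : ∀ l : L, #{p ∈ B | p ∈ l} ≤ k) :
    #B * (#B + q) ≤
      (q + 1) * (q + 2 * k + (k - 2) ^ 2 + 4) + (2 * k - 6) * #{l : L | #{p ∈ B | p ∈ l} = k} := by
  have hclass : ∀ l : L, ∑ l' ∈ parallelClass l, #{p ∈ B | p ∈ l'} ^ 2 ≤
      q + 2 * k + (k - 2) ^ 2 + 4 +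
        (2 * k - 6) * #{l' ∈ parallelClass l | #{p ∈ B | p ∈ l'} = k} := by
    intro l
    rcases Nat.eq_zero_or_pos #{l' ∈ parallelClass l | #{p ∈ B | p ∈ l'} = k} with h | h
    · have hm : ∀ l' ∈ parallelClass l, #{p ∈ B | p ∈ l'} ≤ k - 2 + 1 := fun l' hl' => by
        have := he l'
        have : #{p ∈ B | p ∈ l'} ≠ k := fun h' => by
          rw [card_eq_zero, filter_eq_empty_iff] at h
          exact h hl' h'
        omega
      have := hA.sum_parallelClass_sq_le hq hB hk (by omega) l hm
      rw [show k - (k - 2) = 2 by omega] at this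
      rw [h]
      omega
    · have := hA.sum_parallelClass_sq_le hq hB hk (m := k - 1) (by omega) l
        fun l' _ => by have := he l'; omega
      rw [show k - (k - 1) = 1 by omega] at this
      obtain ⟨j, rfl⟩ : ∃ j, k = j + 4 := ⟨k - 4, by omega⟩
      simp only [show j + 4 - 1 = j + 3 by omega, show j + 4 - 2 = j + 2 by omega,
        show 2 * (j + 4) - 6 = 2 * j + 2 by omega] at this ⊢
      nlinarith
  refine Nat.le_of_mul_le_mul_left ?_ hq
  calc q * (#B * (#B + q))
      = ∑ l : L, ∑ l' ∈ parallelClass l, #{p ∈ B | p ∈ l'} ^ 2 := by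
        rw [hA.sum_sum_parallelClass hq, hA.sum_card_inter_sq]
    _ ≤ ∑ l : L, (q + 2 * k + (k - 2) ^ 2 + 4 +
          (2 * k - 6) * #{l' ∈ parallelClass l | #{p ∈ B | p ∈ l'} = k}) :=
        sum_le_sum fun l _ => hclass l
    _ = _ := by
        rw [sum_add_distrib, ← mul_sum, hA.sum_card_parallelClass_filter hq, sum_const, card_univ,
          ← Nat.card_eq_fintype_card, hA.card_lines, smul_eq_mul]
        ring

theorem mul_card_add_one_le_of_concurrent [Fintype L] (hA : IsAffinePlaneOfOrder P L q)
    (hB : ∀ l : L, ∃ p ∈ B, p ∈ l) {k : ℕ} {b₀ : P}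
    (hconc : ∀ l : L, #{p ∈ B | p ∈ l} = k → b₀ ∈ l) :
    (k - 1) * #{l : L | #{p ∈ B | p ∈ l} = k} + 1 ≤ #B := by
  have hpencil := hA.sum_card_inter_lines_through B b₀
  have hK : ({l : L | #{p ∈ B | p ∈ l} = k} : Finset L) =
      {l ∈ ({l : L | b₀ ∈ l} : Finset L) | #{p ∈ B | p ∈ l} = k} := by
    ext l
    simp only [mem_filter, mem_univ, true_and]
    exact ⟨fun h => ⟨hconc l h, h⟩, And.right⟩
  have hle : ∑ l ∈ ({l : L | b₀ ∈ l} : Finset L),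
      (1 + (k - 1) * if #{p ∈ B | p ∈ l} = k then 1 else 0) ≤
      ∑ l ∈ ({l : L | b₀ ∈ l} : Finset L), #{p ∈ B | p ∈ l} := sum_le_sum fun l _ => by
    have := one_le_card_inter hB l
    split_ifs with h <;> omega
  rw [sum_add_distrib, ← mul_sum, sum_boole, Nat.cast_id, ← hK, sum_const, smul_eq_mul, mul_one,
    hA.card_lines_through] at hle
  split_ifs at hpencil <;> omega

theorem sqrt_add_two_le_of_card_inter_le [Fintype P] [Fintype L] (hA : IsAffinePlaneOfOrder P L q)
    (hq : 25 ≤ q) (hB : ∀ l : L, ∃ p ∈ B, p ∈ l) {k : ℕ} (hk : #B = q + k) (hk2 : 2 ≤ k)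
    (he : ∀ l : L, #{p ∈ B | p ∈ l} ≤ k) : Nat.sqrt q + 2 ≤ k := by
  have hsq := Nat.sqrt_le q
  by_contra! hks
  have h := hA.card_mul_card_add_le_of_card_inter_le_succ (by omega) hB hk (m := k - 1)
    (by omega) fun l => by have := he l; omega
  obtain ⟨m, rfl⟩ : ∃ m, k = m + 1 := ⟨k - 1, by omega⟩
  rw [hk, Nat.add_sub_cancel, Nat.add_sub_cancel_left] at h
  have hm : m * m + 2 ≤ q + m := by
    have := Nat.mul_self_le_mul_self (show m ≤ Nat.sqrt q by omega)
    rcases Nat.lt_or_ge m 2 with h | h <;> nlinarith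
  nlinarith [Nat.mul_le_mul_left q hm]

theorem not_forall_mem_of_card_inter_eq [Fintype P] [Fintype L]
    (hA : IsAffinePlaneOfOrder P L q) (hq : 25 ≤ q) (hB : ∀ l : L, ∃ p ∈ B, p ∈ l)
    (hk : #B = q + (Nat.sqrt q + 2)) (he : ∀ l : L, #{p ∈ B | p ∈ l} ≤ Nat.sqrt q + 2) (b₀ : P) :
    ¬ ∀ l : L, #{p ∈ B | p ∈ l} = Nat.sqrt q + 2 → b₀ ∈ l := by
  intro hconc
  set s := Nat.sqrt q
  have hs : 5 ≤ s := Nat.le_sqrt.2 (by omega)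
  have hsq : s * s ≤ q := Nat.sqrt_le q
  have hqs : q < (s + 1) * (s + 1) := Nat.lt_succ_sqrt q
  have h := hA.card_mul_card_add_le_add_mul_card_long (by omega) hB hk (by omega) he
  have hM := hA.mul_card_add_one_le_of_concurrent hB hconc
  set M := #{l : L | #{p ∈ B | p ∈ l} = s + 2}
  rw [hk, show s + 2 - 2 = s by omega, show 2 * (s + 2) - 6 = 2 * (s - 1) by omega] at h
  rw [hk, show s + 2 - 1 = s + 1 by omega] at hM
  have hM' : M ≤ s + 1 := by nlinarith
  obtain ⟨t, ht⟩ : ∃ t, s = t + 1 := ⟨s - 1, by omega⟩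
  rw [ht, Nat.add_sub_cancel] at h
  rw [ht] at hM' hsq hs
  nlinarith

theorem add_sqrt_add_three_le_card [Fintype P] [Fintype L] (hA : IsAffinePlaneOfOrder P L q)
    (hq : 25 ≤ q) (hB : ∀ l : L, ∃ p ∈ B, p ∈ l) : q + Nat.sqrt q + 3 ≤ #B := by
  by_contra! hsize
  have hs : 5 ≤ Nat.sqrt q := Nat.le_sqrt.2 (by omega)
  have hsq : Nat.sqrt q * Nat.sqrt q ≤ q := Nat.sqrt_le q
  have hq0 : 0 < q := by omega
  obtain ⟨l₀⟩ : Nonempty L := (Nat.card_pos_iff.1 (by rw [hA.card_lines]; positivity)).1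
  obtain ⟨k, hk⟩ : ∃ k, #B = q + k := ⟨#B - q, by
    have := hA.card_inter_add_le_card_add_one hq0 hB l₀
    have := one_le_card_inter hB l₀
    omega⟩
  have he : ∀ l : L, #{p ∈ B | p ∈ l} ≤ k := fun l => by
    have := hA.card_inter_add_le_card hq0 hB (by nlinarith) l
    omega
  have hk2 : 2 ≤ k := by
    obtain ⟨l, hl⟩ := hA.exists_one_lt_card_inter (B := B) (by omega)
    exact hl.trans_le (he l)
  obtain rfl : k = Nat.sqrt q + 2 :=
    le_antisymm (by omega) (hA.sqrt_add_two_le_of_card_inter_le hq hB hk hk2 he)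
  have hconc := hA.not_forall_mem_of_card_inter_eq hq hB hk he
  push Not at hconc
  obtain ⟨b, -⟩ := card_pos.1 (by omega : 0 < #B)
  obtain ⟨l₁, hl₁, -⟩ := hconc b
  have hlow := hA.two_mul_succ_le_card_secants hq0 hk (by omega) he
  have hup := hA.card_secants_le hq0 hB (l₀ := l₁) (by omega) (by omega)
    fun b' _ _ => (hconc b').imp fun l h => ⟨by omega, h.2⟩
  rw [hl₁] at hup
  nlinarith

end BlockingSet

end IsAffinePlaneOfOrder

theorem stmt14 {P L : Type*} [Membership P L] (q : ℕ) (hq : 25 ≤ q)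
    (hA : IsAffinePlaneOfOrder P L q) (B : Set P)
    (hB : ∀ l : L, ∃ p ∈ B, p ∈ l) :
    q + Nat.sqrt q + 3 ≤ B.ncard := by
  have : Finite P := Nat.finite_of_card_ne_zero (by rw [hA.card_points]; positivity)
  have : Finite L := Nat.finite_of_card_ne_zero (by rw [hA.card_lines]; positivity)
  have := Fintype.ofFinite P
  have := Fintype.ofFinite L
  rw [Set.ncard_eq_toFinset_card B B.toFinite]
  exact hA.add_sqrt_add_three_le_card hq fun l => by simpa using hB l
end

section
/- Let P be a finite projective plane of order q, let P₀ be a point and let L be a set of lines such that every point other than P₀ lies on some line of L and P₀ lies on no line of L. Suppose every point lies on at most ⌊√q⌋ + 2 lines of L, all values x_i for 4 ≤ i ≤ ⌊√q⌋ vanish and x_3 = 0, where x_i counts points on exactly i lines of L. Then every line through P₀ contains at most one point lying on ⌊√q⌋ + 1 or more lines of L. -/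
/-!
Let `D p` be the number of lines of `ℒ` through `p`. Every line of `ℒ` meets a line `l` through
`P₀` in one point, so the `D`-values of the `q` points of `l` other than `P₀` add up to
`#ℒ = q + ⌊√q⌋ + 2`; as each is at least `1`, two big knots on `l` force `⌊√q⌋ ≤ 2`. The value
`⌊√q⌋ = 2` would make both big knots lie on exactly three lines, and `⌊√q⌋ = 1` leaves only
`D ≤ 2`. But a set of lines no three of which are concurrent has at most `q + 2` members (the
other lines of `ℒ` meet a fixed one in distinct points), while `#ℒ = q + 3`.
-/

open Finset

namespace Configuration

variable {P L : Type*} [Membership P L] [Fintype P] [∀ (p : P) (l : L), Decidable (p ∈ l)]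

theorem HasPoints.sum_card_filter_mem_eq_card [HasPoints P L] {l : L} {ℒ : Finset L}
    (hl : l ∉ ℒ) : ∑ p : P with p ∈ l, #{m ∈ ℒ | p ∈ m} = #ℒ := by
  have hmeet : ∀ m ∈ ℒ, #{p : P | p ∈ l ∧ p ∈ m} = 1 := fun m hm => by
    rw [card_eq_one_iff_existsUnique]
    simpa using HasPoints.existsUnique_point P L l m fun h => hl (h ▸ hm)
  calc ∑ p : P with p ∈ l, #{m ∈ ℒ | p ∈ m}
      = ∑ m ∈ ℒ, #{p : P | p ∈ l ∧ p ∈ m} := by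
        simpa [bipartiteAbove, bipartiteBelow, filter_filter] using
          sum_card_bipartiteAbove_eq_sum_card_bipartiteBelow (s := {p : P | p ∈ l}) (t := ℒ)
            (r := fun p m => p ∈ m)
    _ = #ℒ := by rw [sum_congr rfl hmeet, card_eq_sum_ones]

variable [Fintype L] [ProjectivePlane P L]

theorem ProjectivePlane.card_filter_mem (l : L) :
    #{p : P | p ∈ l} = ProjectivePlane.order P L + 1 := by
  rw [← ProjectivePlane.pointCount_eq P l, pointCount, Nat.card_eq_fintype_card,
    Fintype.card_subtype]

theorem ProjectivePlane.card_le_order_add_two_of_forall_card_filter_mem_le_two [DecidableEq L]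
    {ℒ : Finset L} (hℒ : ∀ p : P, #{m ∈ ℒ | p ∈ m} ≤ 2) : #ℒ ≤ ProjectivePlane.order P L + 2 := by
  obtain rfl | ⟨m, hm⟩ := ℒ.eq_empty_or_nonempty
  · simp
  have hsum := HasPoints.sum_card_filter_mem_eq_card (P := P) (ℒ.notMem_erase m)
  have hle : ∀ p ∈ ({p : P | p ∈ m} : Finset P), #{m' ∈ ℒ.erase m | p ∈ m'} ≤ 1 :=
    fun p hp => by
      rw [filter_erase, card_erase_of_mem (mem_filter.2 ⟨hm, (mem_filter.1 hp).2⟩)]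
      have := hℒ p
      omega
  have := sum_le_card_nsmul _ _ 1 hle
  rw [hsum, card_erase_of_mem hm, ProjectivePlane.card_filter_mem, smul_eq_mul, mul_one] at this
  omega

theorem ProjectivePlane.card_filter_mem_add_card_filter_mem_le [DecidableEq P] {P₀ : P}
    {ℒ : Finset L} (hcov : ∀ p : P, p ≠ P₀ → ∃ m ∈ ℒ, p ∈ m) (hP₀ : ∀ m ∈ ℒ, P₀ ∉ m)
    {l : L} (hl : P₀ ∈ l) {p₁ p₂ : P} (h₁ : p₁ ∈ l) (h₂ : p₂ ∈ l)
    (hne₁ : p₁ ≠ P₀) (hne₂ : p₂ ≠ P₀) (hne : p₁ ≠ p₂) :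
    #{m ∈ ℒ | p₁ ∈ m} + #{m ∈ ℒ | p₂ ∈ m} + ProjectivePlane.order P L ≤ #ℒ + 2 := by
  set S : Finset P := {p : P | p ∈ l}
  set T : Finset P := {P₀, p₁, p₂}
  have hTS : T ⊆ S := by simp [T, S, insert_subset_iff, hl, h₁, h₂]
  have hT : #T = 3 := by simp [T, hne, hne₁.symm, hne₂.symm]
  have hD₀ : #{m ∈ ℒ | P₀ ∈ m} = 0 := card_eq_zero.2 (filter_eq_empty_iff.2 hP₀)
  have hsumT : ∑ p ∈ T, #{m ∈ ℒ | p ∈ m} = #{m ∈ ℒ | p₁ ∈ m} + #{m ∈ ℒ | p₂ ∈ m} := by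
    simp [T, hne, hne₁.symm, hne₂.symm, hD₀]
  have hrest : #(S \ T) ≤ ∑ p ∈ S \ T, #{m ∈ ℒ | p ∈ m} := by
    rw [card_eq_sum_ones]
    refine sum_le_sum fun p hp => ?_
    obtain ⟨m, hm, hpm⟩ := hcov p fun h => (mem_sdiff.1 hp).2 (by simp [T, h])
    exact card_pos.2 ⟨m, mem_filter.2 ⟨hm, hpm⟩⟩
  have hsum := HasPoints.sum_card_filter_mem_eq_card (P := P) fun hℒ => hP₀ l hℒ hl
  rw [← sum_sdiff hTS, hsumT] at hsum
  rw [card_sdiff_of_subset hTS, hT, ProjectivePlane.card_filter_mem] at hrest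
  omega

end Configuration

theorem stmt16_general {P L : Type*} [Membership P L] [Configuration.ProjectivePlane P L]
    [Fintype P] [Fintype L] [∀ (p : P) (l : L), Decidable (p ∈ l)]
    (q : ℕ) (hq : Configuration.ProjectivePlane.order P L = q)
    (P₀ : P) (ℒ : Finset L)
    (hcov : ∀ p : P, p ≠ P₀ → ∃ l ∈ ℒ, p ∈ l)
    (hP₀ : ∀ l ∈ ℒ, P₀ ∉ l)
    (hcard : ℒ.card = q + Nat.sqrt q + 2)
    (hmax : ∀ p : P, ({l ∈ ℒ | p ∈ l}).card ≤ Nat.sqrt q + 2)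
    (h3 : ({p : P | ({l ∈ ℒ | p ∈ l}).card = 3} : Finset P).card = 0) :
    ∀ l : L, P₀ ∈ l → ∀ p₁ p₂ : P, p₁ ∈ l → p₂ ∈ l →
      Nat.sqrt q + 1 ≤ ({m ∈ ℒ | p₁ ∈ m}).card →
      Nat.sqrt q + 1 ≤ ({m ∈ ℒ | p₂ ∈ m}).card → p₁ = p₂ := by
  classical
  intro l hl p₁ p₂ h₁ h₂ hbig₁ hbig₂
  by_contra hne
  have hne3 : ∀ p : P, #{m ∈ ℒ | p ∈ m} ≠ 3 := by
    simpa using filter_eq_empty_iff.1 (card_eq_zero.1 h3)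
  have hD₀ : #{m ∈ ℒ | P₀ ∈ m} = 0 := card_eq_zero.2 (filter_eq_empty_iff.2 hP₀)
  have hne₁ : p₁ ≠ P₀ := by rintro rfl; omega
  have hne₂ : p₂ ≠ P₀ := by rintro rfl; omega
  have hsqrt : 1 ≤ Nat.sqrt q :=
    Nat.le_sqrt.2 (hq ▸ Configuration.ProjectivePlane.one_lt_order P L).le
  have hbound := Configuration.ProjectivePlane.card_filter_mem_add_card_filter_mem_le
    hcov hP₀ hl h₁ h₂ hne₁ hne₂ hne
  have hsqrt₁ : Nat.sqrt q = 1 := by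
    have := hmax p₁; have := hmax p₂; have := hne3 p₁; have := hne3 p₂
    omega
  have hℒ : ∀ p : P, #{m ∈ ℒ | p ∈ m} ≤ 2 := fun p => by
    have := hmax p; have := hne3 p
    omega
  have := Configuration.ProjectivePlane.card_le_order_add_two_of_forall_card_filter_mem_le_two hℒ
  omega

theorem stmt16 {P L : Type*} [Membership P L] [Configuration.ProjectivePlane P L]
    [Fintype P] [Fintype L] [∀ (p : P) (l : L), Decidable (p ∈ l)]
    (q : ℕ) (hq : Configuration.ProjectivePlane.order P L = q)
    (P₀ : P) (ℒ : Finset L)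
    (hcov : ∀ p : P, p ≠ P₀ → ∃ l ∈ ℒ, p ∈ l)
    (hP₀ : ∀ l ∈ ℒ, P₀ ∉ l)
    (hcard : ℒ.card = q + Nat.sqrt q + 2)
    (hmax : ∀ p : P, ({l ∈ ℒ | p ∈ l}).card ≤ Nat.sqrt q + 2)
    (hmid : ∀ i, 4 ≤ i → i ≤ Nat.sqrt q →
      ({p : P | ({l ∈ ℒ | p ∈ l}).card = i} : Finset P).card = 0)
    (h3 : ({p : P | ({l ∈ ℒ | p ∈ l}).card = 3} : Finset P).card = 0) :
    ∀ l : L, P₀ ∈ l → ∀ p₁ p₂ : P, p₁ ∈ l → p₂ ∈ l →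
      Nat.sqrt q + 1 ≤ ({m ∈ ℒ | p₁ ∈ m}).card →
      Nat.sqrt q + 1 ≤ ({m ∈ ℒ | p₂ ∈ m}).card → p₁ = p₂ :=
  stmt16_general q hq P₀ ℒ hcov hP₀ hcard hmax h3
end
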